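/- arXiv:2411.15067 — 2 statements merged into one kernel-verified Lean document; each statement's English description precedes it below -/
import Mathlib

section
/- Entropy sandwich lemma: assume F : P2(R^d) → R is flat-convex with flat derivative satisfying |δF/δμ(μ',x') − δF/δμ(μ,x)| ≤ L_F(|x'−x| + W2(μ',μ)) and |δF/δμ(μ,x)| ≤ C_F, and assume π(dx) ∝ e^{−U(x)}dx with U : R^d → R continuously differentiable, bounded below, and of at least quadratic growth. Let μ*_σ be the unique minimizer of F^σ(μ) = F(μ) + σKL(μ|π), which is absolutely continuous with respect to Lebesgue measure. Then for every μ ∈ P2(R^d): σKL(μ|μ*_σ) ≤ F^σ(μ) − F^σ(μ*_σ) ≤ σKL(μ|Φ[μ]). -/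
open MeasureTheory Filter Set
open scoped ENNReal NNReal Topology RealInnerProductSpace Classical

noncomputable section

/-- Euclidean space `ℝ^d`. -/
abbrev Ed (d : ℕ) := EuclideanSpace ℝ (Fin d)

/-- `μ` is a probability measure on `ℝ^d` with finite second moment (i.e. `μ ∈ P₂(ℝ^d)`). -/
def P2 {d : ℕ} (μ : Measure (Ed d)) : Prop :=
  IsProbabilityMeasure μ ∧ Integrable (fun x => ‖x‖ ^ 2) μ

/-- `γ` is a coupling of `μ` and `ν`. -/
def IsCoupling {d : ℕ} (γ : Measure (Ed d × Ed d)) (μ ν : Measure (Ed d)) : Prop :=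
  γ.map Prod.fst = μ ∧ γ.map Prod.snd = ν

/-- The squared 2-Wasserstein distance `W₂²(μ,ν)`. -/
def W2sq {d : ℕ} (μ ν : Measure (Ed d)) : ℝ :=
  sInf { r : ℝ | ∃ γ : Measure (Ed d × Ed d), IsCoupling γ μ ν ∧
      Integrable (fun p => ‖p.1 - p.2‖ ^ 2) γ ∧ r = ∫ p, ‖p.1 - p.2‖ ^ 2 ∂γ }

/-- The 2-Wasserstein distance `W₂(μ,ν)`. -/
def W2 {d : ℕ} (μ ν : Measure (Ed d)) : ℝ := Real.sqrt (W2sq μ ν)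

/-- `T` is an optimal transport map from `μ` to `ν`. -/
def IsOptimalMap {d : ℕ} (μ ν : Measure (Ed d)) (T : Ed d → Ed d) : Prop :=
  Measurable T ∧ μ.map T = ν ∧ Integrable (fun x => ‖x - T x‖ ^ 2) μ ∧
    ∫ x, ‖x - T x‖ ^ 2 ∂μ = W2sq μ ν

/-- The Kullback–Leibler divergence `KL(μ|π)`, equal to `+∞` unless `μ ≪ π` and the
relative entropy integral makes sense. -/
def KL {d : ℕ} (μ π : Measure (Ed d)) : ℝ≥0∞ :=
  if μ ≪ π ∧ Integrable (fun x => Real.log ((μ.rnDeriv π x).toReal)) μ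
  then ENNReal.ofReal (∫ x, Real.log ((μ.rnDeriv π x).toReal) ∂μ)
  else ⊤

/-- `g` is a weak (distributional) gradient of `f : ℝ^d → ℝ`. -/
def HasWeakGradient {d : ℕ} (f : Ed d → ℝ) (g : Ed d → Ed d) : Prop :=
  ∀ φ : Ed d → ℝ, ContDiff ℝ (⊤ : ℕ∞) φ → HasCompactSupport φ →
    ∫ x, f x • gradient φ x = - ∫ x, φ x • g x

/-- Relative Fisher information `I(μ|ν) = ∫ |∇ log (dμ/dν)|² dμ = 4 ∫ |∇ √(dμ/dν)|² dν`,
equal to `+∞` unless `μ ≪ ν` and `√(dμ/dν)` has a weak gradient. -/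
def FisherInfo {d : ℕ} (μ ν : Measure (Ed d)) : ℝ≥0∞ :=
  if μ ≪ ν then
    sInf { r : ℝ≥0∞ | ∃ g : Ed d → Ed d,
      HasWeakGradient (fun x => Real.sqrt ((μ.rnDeriv ν x).toReal)) g ∧
      r = 4 * ∫⁻ x, (‖g x‖₊ : ℝ≥0∞) ^ 2 ∂ν }
  else ⊤

/-- The Sobolev regularity class `𝔠 = { m ∈ P₂ : m ≪ π, dm/dπ ∈ W^{1,1}_loc,
√(dm/dπ) ∈ W^{1,2}_π }`. -/
def ClassC {d : ℕ} (π m : Measure (Ed d)) : Prop :=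
  P2 m ∧ m ≪ π ∧
  (LocallyIntegrable (fun x => (m.rnDeriv π x).toReal) volume ∧
    ∃ g : Ed d → Ed d, LocallyIntegrable g volume ∧
      HasWeakGradient (fun x => (m.rnDeriv π x).toReal) g) ∧
  (MemLp (fun x => Real.sqrt ((m.rnDeriv π x).toReal)) 2 π ∧
    ∃ h : Ed d → Ed d, MemLp h 2 π ∧
      HasWeakGradient (fun x => Real.sqrt ((m.rnDeriv π x).toReal)) h)

/-- `DF` is the flat (linear functional) derivative of `F` on `P₂(ℝ^d)`. -/
structure IsFlatDeriv {d : ℕ} (F : Measure (Ed d) → ℝ)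
    (DF : Measure (Ed d) → Ed d → ℝ) : Prop where
  growth : ∃ κ > (0 : ℝ), ∀ (μ : Measure (Ed d)) (x : Ed d), P2 μ →
    |DF μ x| ≤ κ * (1 + ‖x‖ ^ 2)
  limit : ∀ μ μ' : Measure (Ed d), P2 μ → P2 μ' →
    Tendsto (fun ε : ℝ =>
        (F (ENNReal.ofReal (1 - ε) • μ + ENNReal.ofReal ε • μ') - F μ) / ε)
      (nhdsWithin 0 (Set.Ioi 0))
      (nhds ((∫ x, DF μ x ∂μ') - ∫ x, DF μ x ∂μ))
  centered : ∀ μ : Measure (Ed d), P2 μ → (∫ x, DF μ x ∂μ) = 0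

/-- Flat convexity of `F`: `F(μ') - F(μ) ≥ ∫ δF/δμ(μ,x) (μ'-μ)(dx)`. -/
def FlatConvex {d : ℕ} (F : Measure (Ed d) → ℝ)
    (DF : Measure (Ed d) → Ed d → ℝ) : Prop :=
  ∀ μ μ' : Measure (Ed d), P2 μ → P2 μ' →
    (∫ x, DF μ x ∂μ') - (∫ x, DF μ x ∂μ) ≤ F μ' - F μ

/-- Lipschitz continuity of the flat derivative. -/
def FlatLip {d : ℕ} (DF : Measure (Ed d) → Ed d → ℝ) (L : ℝ) : Prop :=
  ∀ (μ μ' : Measure (Ed d)) (x x' : Ed d), P2 μ → P2 μ' →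
    |DF μ' x' - DF μ x| ≤ L * (‖x' - x‖ + W2 μ' μ)

/-- Boundedness of the flat derivative. -/
def FlatBdd {d : ℕ} (DF : Measure (Ed d) → Ed d → ℝ) (C : ℝ) : Prop :=
  ∀ (μ : Measure (Ed d)) (x : Ed d), P2 μ → |DF μ x| ≤ C

/-- Lipschitz continuity of the Wasserstein gradient. -/
def GradLip {d : ℕ} (G : Measure (Ed d) → Ed d → Ed d) (L : ℝ) : Prop :=
  ∀ (μ μ' : Measure (Ed d)) (x x' : Ed d), P2 μ → P2 μ' →
    ‖G μ' x' - G μ x‖ ≤ L * (‖x' - x‖ + W2 μ' μ)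

/-- Joint continuity of the Wasserstein gradient in `(μ,x)` with respect to
the product of the `W₂` and norm topologies. -/
def GradJointCont {d : ℕ} (G : Measure (Ed d) → Ed d → Ed d) : Prop :=
  ∀ (μ : Measure (Ed d)) (x : Ed d), P2 μ → ∀ ε > (0 : ℝ), ∃ δ > (0 : ℝ),
    ∀ (μ' : Measure (Ed d)) (x' : Ed d), P2 μ' →
      W2 μ' μ < δ → ‖x' - x‖ < δ → ‖G μ' x' - G μ x‖ < ε

/-- The normalized Gibbs measure with potential `V`, i.e. `Z⁻¹ e^{-V(x)} dx`. -/
def gibbs {d : ℕ} (V : Ed d → ℝ) : Measure (Ed d) :=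
  volume.withDensity (fun x => ENNReal.ofReal (Real.exp (-V x) / ∫ y, Real.exp (-V y)))

/-- The proximal Gibbs measure `Φ[μ] ∝ e^{-σ⁻¹ δF/δμ(μ,·) - U}`. -/
def proxGibbs {d : ℕ} (DF : Measure (Ed d) → Ed d → ℝ) (U : Ed d → ℝ) (σ : ℝ)
    (μ : Measure (Ed d)) : Measure (Ed d) :=
  gibbs (fun x => σ⁻¹ * DF μ x + U x)

/-- The entropy-regularized objective `F^σ(μ) = F(μ) + σ KL(μ|π)`, with values in `EReal`. -/
def FSigma {d : ℕ} (F : Measure (Ed d) → ℝ) (π : Measure (Ed d)) (σ : ℝ)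
    (μ : Measure (Ed d)) : EReal :=
  (F μ : EReal) + (σ : EReal) * (KL μ π : EReal)

/-- The objective of one proximal point (JKO) step with base point `μprev`. -/
def JKOprox {d : ℕ} (F : Measure (Ed d) → ℝ) (π : Measure (Ed d)) (σ τ : ℝ)
    (μprev μ : Measure (Ed d)) : EReal :=
  (F μ : EReal) + (σ : EReal) * (KL μ π : EReal)
    + ((W2sq μ μprev / (2 * τ) : ℝ) : EReal)

/-- The objective of one prox-linear step with base point `μprev`. -/
def JKOlin {d : ℕ} (DF : Measure (Ed d) → Ed d → ℝ) (π : Measure (Ed d)) (σ τ : ℝ)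
    (μprev μ : Measure (Ed d)) : EReal :=
  (((∫ x, DF μprev x ∂μ) - ∫ x, DF μprev x ∂μprev : ℝ) : EReal)
    + (σ : EReal) * (KL μ π : EReal) + ((W2sq μ μprev / (2 * τ) : ℝ) : EReal)

/-- The objective of the JKO step of the proximal gradient scheme, with base point `νnew`. -/
def JKOgrad {d : ℕ} (π : Measure (Ed d)) (σ τ : ℝ)
    (νnew μ : Measure (Ed d)) : EReal :=
  (σ : EReal) * (KL μ π : EReal) + ((W2sq μ νnew / (2 * τ) : ℝ) : EReal)

/-- `U` is bounded below. -/
def UBoundedBelow {d : ℕ} (U : Ed d → ℝ) : Prop := ∃ c : ℝ, ∀ x, c ≤ U x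

/-- `U` has at least quadratic growth at infinity. -/
def UQuadGrowth {d : ℕ} (U : Ed d → ℝ) : Prop :=
  ∃ c > (0 : ℝ), ∃ R : ℝ, ∀ x : Ed d, R ≤ ‖x‖ → c * ‖x‖ ^ 2 ≤ U x

/-- `U` is `α`-strongly convex (monotonicity of the gradient). -/
def StronglyConvexPot {d : ℕ} (U : Ed d → ℝ) (α : ℝ) : Prop :=
  ∀ x y : Ed d, α * ‖x - y‖ ^ 2 ≤ ⟪x - y, gradient U x - gradient U y⟫
namespace EntropySandwich

open Real MeasureTheory

variable {d : ℕ}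

instance instHLDEd (μ ν : Measure (Ed d)) [IsFiniteMeasure μ] [IsFiniteMeasure ν] :
    μ.HaveLebesgueDecomposition ν :=
  Measure.haveLebesgueDecomposition_of_sigmaFinite _ _

lemma neZero_vol : NeZero (volume : Measure (Ed d)) := by
  constructor
  intro h
  have h1 : (volume : Measure (Ed d)) Set.univ ≠ 0 :=
    IsOpen.measure_ne_zero volume isOpen_univ Set.univ_nonempty
  rw [h] at h1
  simp at h1

lemma integrable_gauss {b : ℝ} (hb : 0 < b) :
    Integrable (fun x : Ed d => Real.exp (-b * ‖x‖ ^ 2)) := by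
  have h := (GaussianFourier.integrable_cexp_neg_mul_sq_norm_add_of_euclideanSpace
    (ι := Fin d) (b := (b : ℂ)) (by simpa using hb) 0 0).norm
  refine h.congr (Filter.Eventually.of_forall fun x => ?_)
  have : ((-(b:ℂ)) * ((‖x‖:ℝ):ℂ) ^ 2 + 0 * ((inner ℝ (0 : Ed d) x : ℝ) : ℂ)).re = -b * ‖x‖ ^ 2 := by
    have : (((‖x‖:ℝ):ℂ) ^ 2).re = ‖x‖ ^ 2 := by norm_cast
    simp [this]
  simp only [Complex.norm_exp, neg_mul] at *
  rw [this]

lemma le_exp_self_aux {u : ℝ} (hu : 0 ≤ u) : u * Real.exp (-u) ≤ 1 := by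
  have h := Real.add_one_le_exp u
  have h2 : 0 < Real.exp u := Real.exp_pos u
  rw [Real.exp_neg]
  rw [mul_inv_le_iff₀' h2]
  nlinarith

/-- Integrability of `g · exp (-V)` for `V` of quadratic growth and `g` of quadratic bound. -/
lemma integrable_weight_exp_neg {V g : Ed d → ℝ} (hV : Continuous V)
    (hquad : UQuadGrowth V) (hg : Continuous g)
    {A B : ℝ} (hA : 0 ≤ A) (hB : 0 ≤ B) (hgb : ∀ x, |g x| ≤ A + B * ‖x‖ ^ 2) :
    Integrable (fun x => g x * Real.exp (-V x)) := by
  obtain ⟨c, hc, R, hR⟩ := hquad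
  have hcont : Continuous fun x : Ed d => g x * Real.exp (-V x) :=
    hg.mul (Real.continuous_exp.comp hV.neg)
  have h1 : IntegrableOn (fun x => g x * Real.exp (-V x)) (Metric.closedBall 0 R) :=
    hcont.continuousOn.integrableOn_compact (isCompact_closedBall _ _)
  have hgauss : Integrable (fun x : Ed d => (A + 2 * B / c) * Real.exp (-(c / 2) * ‖x‖ ^ 2)) :=
    (integrable_gauss (by linarith)).const_mul _
  have h2 : IntegrableOn (fun x => g x * Real.exp (-V x)) (Metric.closedBall 0 R)ᶜ := by
    refine Integrable.mono' hgauss.restrict hcont.aestronglyMeasurable.restrict ?_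
    rw [ae_restrict_iff' (measurableSet_closedBall.compl)]
    refine Filter.Eventually.of_forall fun x hx => ?_
    have hxR : R ≤ ‖x‖ := by
      simp only [Set.mem_compl_iff, Metric.mem_closedBall, dist_zero_right, not_le] at hx
      linarith
    have hVx : c * ‖x‖ ^ 2 ≤ V x := hR x hxR
    have hnn : (0:ℝ) ≤ ‖x‖ ^ 2 := sq_nonneg _
    have hexp : Real.exp (-V x) ≤ Real.exp (-(c * ‖x‖ ^ 2)) :=
      Real.exp_le_exp.mpr (by linarith)
    have hsplit : Real.exp (-(c * ‖x‖ ^ 2))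
        = Real.exp (-(c / 2) * ‖x‖ ^ 2) * Real.exp (-(c / 2) * ‖x‖ ^ 2) := by
      rw [← Real.exp_add]; ring_nf
    have hb2 : B * ‖x‖ ^ 2 * Real.exp (-(c / 2) * ‖x‖ ^ 2) ≤ 2 * B / c := by
      have := le_exp_self_aux (u := (c / 2) * ‖x‖ ^ 2) (by positivity)
      have hc2 : (0:ℝ) < c / 2 := by linarith
      calc B * ‖x‖ ^ 2 * Real.exp (-(c / 2) * ‖x‖ ^ 2)
          = (B * (2 / c)) * ((c / 2 * ‖x‖ ^ 2) * Real.exp (-(c / 2 * ‖x‖ ^ 2))) := by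
            field_simp
        _ ≤ (B * (2 / c)) * 1 := by
            refine mul_le_mul_of_nonneg_left ?_ (by positivity)
            simpa using this
        _ = 2 * B / c := by ring
    have hexp1 : Real.exp (-(c / 2) * ‖x‖ ^ 2) ≤ 1 := by
      rw [Real.exp_le_one_iff]
      nlinarith
    calc ‖g x * Real.exp (-V x)‖
        = |g x| * Real.exp (-V x) := by
          rw [norm_mul, Real.norm_eq_abs, Real.norm_eq_abs, abs_of_pos (Real.exp_pos _)]
      _ ≤ (A + B * ‖x‖ ^ 2) * Real.exp (-(c * ‖x‖ ^ 2)) := by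
          refine mul_le_mul (hgb x) hexp (Real.exp_pos _).le ?_
          have := abs_nonneg (g x); nlinarith [hgb x]
      _ = A * Real.exp (-(c * ‖x‖ ^ 2))
          + (B * ‖x‖ ^ 2 * Real.exp (-(c / 2) * ‖x‖ ^ 2)) * Real.exp (-(c / 2) * ‖x‖ ^ 2) := by
          rw [hsplit]; ring
      _ ≤ A * Real.exp (-(c / 2) * ‖x‖ ^ 2) + (2 * B / c) * Real.exp (-(c / 2) * ‖x‖ ^ 2) := by
          refine add_le_add (mul_le_mul_of_nonneg_left (Real.exp_le_exp.mpr (by nlinarith)) hA)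
            (mul_le_mul_of_nonneg_right hb2 (Real.exp_pos _).le)
      _ = (A + 2 * B / c) * Real.exp (-(c / 2) * ‖x‖ ^ 2) := by ring
  have := h1.union h2
  rwa [Set.union_compl_self, integrableOn_univ] at this

/-! ### Gibbs measures as tilted volume -/

lemma gibbs_eq_tilted (V : Ed d → ℝ) :
    gibbs V = Measure.tilted volume (fun x => -V x) := rfl

lemma isProbabilityMeasure_gibbs {V : Ed d → ℝ}
    (hV : Integrable (fun x => Real.exp (-V x)) (volume : Measure (Ed d))) :
    IsProbabilityMeasure (gibbs V) := by
  haveI := neZero_vol (d := d)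
  rw [gibbs_eq_tilted]
  exact isProbabilityMeasure_tilted hV

lemma P2_gibbs {V : Ed d → ℝ} (hVc : Continuous V) (hquad : UQuadGrowth V) :
    P2 (gibbs V) := by
  have h1 : Integrable (fun x => Real.exp (-V x)) (volume : Measure (Ed d)) := by
    have := integrable_weight_exp_neg (g := fun _ => (1:ℝ)) hVc hquad continuous_const
      (A := 1) (B := 0) zero_le_one le_rfl (fun x => by norm_num)
    simpa using this
  have h2 : Integrable (fun x => ‖x‖ ^ 2 * Real.exp (-V x)) (volume : Measure (Ed d)) :=
    integrable_weight_exp_neg (g := fun x => ‖x‖ ^ 2) hVc hquad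
      (continuous_norm.pow 2) (A := 0) (B := 1) le_rfl zero_le_one
      (fun x => by simp [abs_of_nonneg (sq_nonneg ‖x‖)])
  refine ⟨isProbabilityMeasure_gibbs h1, ?_⟩
  unfold gibbs
  have hZ : 0 < ∫ y, Real.exp (-V y) := by
    haveI := neZero_vol (d := d)
    exact integral_exp_pos (f := fun x => -V x) h1
  have hmeas : Measurable fun x : Ed d => ENNReal.ofReal (Real.exp (-V x) / ∫ y, Real.exp (-V y)) :=
    ((Real.continuous_exp.comp hVc.neg).div_const _).measurable.ennreal_ofReal
  rw [integrable_withDensity_iff hmeas (Filter.Eventually.of_forall fun x => ENNReal.ofReal_lt_top)]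
  have : (fun x : Ed d => ‖x‖ ^ 2 *
      (ENNReal.ofReal (Real.exp (-V x) / ∫ y, Real.exp (-V y))).toReal)
      = fun x => (‖x‖ ^ 2 * Real.exp (-V x)) * (∫ y, Real.exp (-V y))⁻¹ := by
    funext x
    rw [ENNReal.toReal_ofReal (by positivity)]
    field_simp
  rw [this]
  exact h2.mul_const _

/-! ### KL and llr -/

lemma KL_eq (μ ν : Measure (Ed d)) :
    KL μ ν = if μ ≪ ν ∧ Integrable (llr μ ν) μ
      then ENNReal.ofReal (∫ x, llr μ ν x ∂μ) else ⊤ := rfl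

lemma integral_exp_neg_llr_le_one {μ ν : Measure (Ed d)} [IsProbabilityMeasure μ]
    [IsProbabilityMeasure ν] (hμν : μ ≪ ν) :
    ∫ x, (ν.rnDeriv μ x).toReal ∂μ ≤ 1 := by
  rw [Measure.integral_toReal_rnDeriv']
  have h1 : ((ν : Measure (Ed d)) Set.univ).toReal = 1 := by simp
  have h2 : 0 ≤ ((ν.singularPart μ) Set.univ).toReal := ENNReal.toReal_nonneg
  simp only [Measure.real] at *
  linarith

lemma llr_integral_nonneg {μ ν : Measure (Ed d)} [IsProbabilityMeasure μ]
    [IsProbabilityMeasure ν] (hμν : μ ≪ ν) (h : Integrable (llr μ ν) μ) :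
    0 ≤ ∫ x, llr μ ν x ∂μ := by
  have hexp : (fun x => Real.exp (- llr μ ν x)) =ᵐ[μ] fun x => (ν.rnDeriv μ x).toReal :=
    exp_neg_llr hμν
  have hint : Integrable (fun x => Real.exp (- llr μ ν x)) μ :=
    Measure.integrable_toReal_rnDeriv.congr hexp.symm
  have key : ∀ x, - llr μ ν x ≤ Real.exp (- llr μ ν x) - 1 := fun x => by
    linarith [Real.add_one_le_exp (- llr μ ν x)]
  have h1 : ∫ x, - llr μ ν x ∂μ ≤ ∫ x, (Real.exp (- llr μ ν x) - 1) ∂μ :=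
    integral_mono h.neg (hint.sub (integrable_const 1)) key
  rw [integral_neg, integral_sub hint (integrable_const 1)] at h1
  have h2 : ∫ x, Real.exp (- llr μ ν x) ∂μ = ∫ x, (ν.rnDeriv μ x).toReal ∂μ :=
    integral_congr_ae hexp
  have h3 := integral_exp_neg_llr_le_one hμν
  simp only [integral_const, measure_univ, ENNReal.toReal_one, probReal_univ, smul_eq_mul, one_mul] at h1
  linarith

lemma eq_of_llr_integral_nonpos {μ ν : Measure (Ed d)} [IsProbabilityMeasure μ]
    [IsProbabilityMeasure ν] (hμν : μ ≪ ν) (h : Integrable (llr μ ν) μ)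
    (hle : ∫ x, llr μ ν x ∂μ ≤ 0) : μ = ν := by
  have hexp : (fun x => Real.exp (- llr μ ν x)) =ᵐ[μ] fun x => (ν.rnDeriv μ x).toReal :=
    exp_neg_llr hμν
  have hint : Integrable (fun x => Real.exp (- llr μ ν x)) μ :=
    Measure.integrable_toReal_rnDeriv.congr hexp.symm
  have hgnn : ∀ x, 0 ≤ Real.exp (- llr μ ν x) - 1 + llr μ ν x := fun x => by
    linarith [Real.add_one_le_exp (- llr μ ν x)]
  have hgint : Integrable (fun x => Real.exp (- llr μ ν x) - 1 + llr μ ν x) μ :=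
    (hint.sub (integrable_const 1)).add h
  have hsum : ∫ x, (Real.exp (- llr μ ν x) - 1 + llr μ ν x) ∂μ
      = ∫ x, (Real.exp (- llr μ ν x) - 1) ∂μ + ∫ x, llr μ ν x ∂μ :=
    integral_add (hint.sub (integrable_const 1)) h
  have hgI : ∫ x, (Real.exp (- llr μ ν x) - 1 + llr μ ν x) ∂μ ≤ 0 := by
    rw [hsum, integral_sub hint (integrable_const 1)]
    simp only [integral_const, measure_univ, ENNReal.toReal_one, probReal_univ, smul_eq_mul, one_mul]
    rw [integral_congr_ae hexp]
    linarith [integral_exp_neg_llr_le_one hμν]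
  have hg0 : ∫ x, (Real.exp (- llr μ ν x) - 1 + llr μ ν x) ∂μ = 0 :=
    le_antisymm hgI (integral_nonneg hgnn)
  have hae : (fun x => Real.exp (- llr μ ν x) - 1 + llr μ ν x) =ᵐ[μ] 0 :=
    (integral_eq_zero_iff_of_nonneg hgnn hgint).mp hg0
  have hllr0 : llr μ ν =ᵐ[μ] 0 := by
    filter_upwards [hae] with x hx
    by_contra hne
    have hne' : - llr μ ν x ≠ 0 := by simpa using hne
    have := Real.add_one_lt_exp hne'
    simp only [Pi.zero_apply] at hx
    linarith
  have hrn1 : μ.rnDeriv ν =ᵐ[μ] fun _ => (1 : ℝ≥0∞) := by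
    filter_upwards [hllr0, Measure.rnDeriv_pos hμν, hμν.ae_le (Measure.rnDeriv_lt_top μ ν)]
      with x hx hpos hlt
    have h0 : (μ.rnDeriv ν x).toReal ≠ 0 := by
      simp [ENNReal.toReal_eq_zero_iff, hpos.ne', hlt.ne]
    have htr : (μ.rnDeriv ν x).toReal = 1 := by
      rcases Real.log_eq_zero.mp (by simpa [llr] using hx) with h | h | h
      · exact absurd h h0
      · exact h
      · nlinarith [ENNReal.toReal_nonneg (a := μ.rnDeriv ν x)]
    exact (ENNReal.toReal_eq_one_iff _).mp htr
  classical
  set f := μ.rnDeriv ν with hf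
  have hmeas : Measurable f := Measure.measurable_rnDeriv μ ν
  set A := {x | f x < 1} with hA
  set B := {x | 1 < f x} with hB
  have hAm : MeasurableSet A := hmeas measurableSet_Iio
  have hBm : MeasurableSet B := hmeas measurableSet_Ioi
  have hne : μ {x | f x ≠ 1} = 0 := by
    have := hrn1
    rw [Filter.EventuallyEq, ae_iff] at this
    simpa using this
  have hμA : μ A = 0 := measure_mono_null (fun x hx => ne_of_lt hx) hne
  have hμB : μ B = 0 := measure_mono_null (fun x hx => ne_of_gt hx) hne
  have hsetl : ∀ s : Set (Ed d), MeasurableSet s → μ s = ∫⁻ x in s, f x ∂ν :=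
    fun s _ => (Measure.setLIntegral_rnDeriv hμν s).symm
  have hνB : ν B = 0 := by
    have h1 : ν B ≤ ∫⁻ x in B, f x ∂ν := by
      rw [← setLIntegral_one]
      refine setLIntegral_mono_ae hmeas.aemeasurable ?_
      exact Filter.Eventually.of_forall fun x hx => le_of_lt hx
    rw [← hsetl B hBm] at h1
    exact le_antisymm (h1.trans (le_of_eq hμB)) zero_le
  have hνA : ν A = 0 := by
    have htot : (1 : ℝ≥0∞) = ∫⁻ x, f x ∂ν := by
      have := hsetl Set.univ MeasurableSet.univ
      simpa using this
    have hsplit : ∫⁻ x, f x ∂ν = ∫⁻ x in A, f x ∂ν + ∫⁻ x in Aᶜ, f x ∂ν :=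
      (lintegral_add_compl _ hAm).symm
    have hA0 : ∫⁻ x in A, f x ∂ν = 0 := by rw [← hsetl A hAm]; exact hμA
    have hre : ∫⁻ x in Aᶜ, f x ∂ν = ∫⁻ x in Aᶜ ∩ Bᶜ, f x ∂ν := by
      refine (setLIntegral_congr ?_).symm
      rw [Filter.eventuallyEq_set]
      have hsub : {x | ¬(x ∈ Aᶜ ∩ Bᶜ ↔ x ∈ Aᶜ)} ⊆ B := by
        intro x hx
        simp only [Set.mem_setOf_eq, Set.mem_inter_iff, Set.mem_compl_iff] at hx
        by_contra hxB
        exact hx (by tauto)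
      rw [ae_iff]
      exact measure_mono_null hsub hνB
    have hAc : ∫⁻ x in Aᶜ ∩ Bᶜ, f x ∂ν = ν (Aᶜ ∩ Bᶜ) := by
      have hone : ∀ᵐ x ∂(ν.restrict (Aᶜ ∩ Bᶜ)), f x = 1 := by
        rw [ae_restrict_iff' (hAm.compl.inter hBm.compl)]
        refine Filter.Eventually.of_forall fun x hx => ?_
        obtain ⟨hx1, hx2⟩ := hx
        simp only [A, Set.mem_compl_iff, Set.mem_setOf_eq, not_lt] at hx1
        simp only [B, Set.mem_compl_iff, Set.mem_setOf_eq, not_lt] at hx2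
        exact le_antisymm hx2 hx1
      rw [lintegral_congr_ae hone, setLIntegral_one]
    have htot2 : (1 : ℝ≥0∞) = ν (Aᶜ ∩ Bᶜ) := by
      rw [htot, hsplit, hA0, zero_add, hre, hAc]
    have hdisj : Disjoint (Aᶜ ∩ Bᶜ) (A ∪ B) := by
      rw [Set.disjoint_iff]
      rintro x ⟨⟨hxa, hxb⟩, hx2⟩
      rcases hx2 with hxx | hxx
      · exact hxa hxx
      · exact hxb hxx
    have huniv : (Aᶜ ∩ Bᶜ) ∪ (A ∪ B) = Set.univ := by
      ext x
      simp only [Set.mem_union, Set.mem_inter_iff, Set.mem_compl_iff, Set.mem_univ, iff_true]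
      by_cases h1 : x ∈ A
      · exact Or.inr (Or.inl h1)
      · by_cases h2 : x ∈ B
        · exact Or.inr (Or.inr h2)
        · exact Or.inl ⟨h1, h2⟩
    have hsum2 : ν (Aᶜ ∩ Bᶜ) + ν (A ∪ B) = 1 := by
      rw [← measure_union hdisj (hAm.union hBm), huniv]
      simp
    have hAB0 : ν (A ∪ B) = 0 := by
      have hfin : ν (Aᶜ ∩ Bᶜ) ≠ ⊤ := measure_ne_top _ _
      have : ν (Aᶜ ∩ Bᶜ) + ν (A ∪ B) = ν (Aᶜ ∩ Bᶜ) + 0 := by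
        rw [add_zero, hsum2, htot2]
      exact (ENNReal.add_right_inj hfin).mp this
    exact measure_mono_null Set.subset_union_left hAB0
  have hνAB : f =ᵐ[ν] fun _ => (1:ℝ≥0∞) := by
    have hU : ν (A ∪ B) = 0 := by
      rw [measure_union_null_iff]; exact ⟨hνA, hνB⟩
    rw [Filter.EventuallyEq, ae_iff]
    refine measure_mono_null ?_ hU
    intro x hx
    simp only [Set.mem_setOf_eq] at hx
    rcases lt_trichotomy (f x) 1 with hxx | hxx | hxx
    · exact Or.inl hxx
    · exact absurd hxx hx
    · exact Or.inr hxx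
  calc μ = ν.withDensity (μ.rnDeriv ν) := (Measure.withDensity_rnDeriv_eq μ ν hμν).symm
    _ = ν.withDensity (fun _ => (1:ℝ≥0∞)) := withDensity_congr_ae hνAB
    _ = ν := by simp

/-! ### W₂(μ,μ) = 0 and continuity of the flat derivative -/

lemma W2sq_self_eq_zero {μ : Measure (Ed d)} (hμ : P2 μ) : W2sq μ μ = 0 := by
  haveI : IsProbabilityMeasure μ := hμ.1
  have hdiag : Measurable fun x : Ed d => (x, x) := measurable_id.prodMk measurable_id
  have hfc : Continuous fun p : Ed d × Ed d => ‖p.1 - p.2‖ ^ 2 :=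
    ((continuous_fst.sub continuous_snd).norm.pow 2)
  set γ : Measure (Ed d × Ed d) := μ.map fun x => (x, x) with hγ
  have hc1 : γ.map Prod.fst = μ := by
    rw [hγ, Measure.map_map measurable_fst hdiag]
    simp [Function.comp_def]
  have hc2 : γ.map Prod.snd = μ := by
    rw [hγ, Measure.map_map measurable_snd hdiag]
    simp [Function.comp_def]
  have hint : Integrable (fun p : Ed d × Ed d => ‖p.1 - p.2‖ ^ 2) γ := by
    rw [hγ, integrable_map_measure hfc.aestronglyMeasurable hdiag.aemeasurable]
    refine (integrable_const (0:ℝ)).congr ?_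
    refine Filter.Eventually.of_forall fun x => ?_
    simp [Function.comp_def]
  have hval : ∫ p, ‖p.1 - p.2‖ ^ 2 ∂γ = 0 := by
    rw [hγ, integral_map hdiag.aemeasurable hfc.aestronglyMeasurable]
    simp
  have hmem : (0:ℝ) ∈ {r : ℝ | ∃ γ' : Measure (Ed d × Ed d), IsCoupling γ' μ μ ∧
      Integrable (fun p => ‖p.1 - p.2‖ ^ 2) γ' ∧ r = ∫ p, ‖p.1 - p.2‖ ^ 2 ∂γ'} :=
    ⟨γ, ⟨hc1, hc2⟩, hint, hval.symm⟩
  have hlb : ∀ r ∈ {r : ℝ | ∃ γ' : Measure (Ed d × Ed d), IsCoupling γ' μ μ ∧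
      Integrable (fun p => ‖p.1 - p.2‖ ^ 2) γ' ∧ r = ∫ p, ‖p.1 - p.2‖ ^ 2 ∂γ'}, (0:ℝ) ≤ r := by
    rintro r ⟨γ', _, _, rfl⟩
    exact integral_nonneg fun p => sq_nonneg _
  exact le_antisymm (csInf_le ⟨0, hlb⟩ hmem) (le_csInf ⟨0, hmem⟩ hlb)

lemma W2_self_eq_zero {μ : Measure (Ed d)} (hμ : P2 μ) : W2 μ μ = 0 := by
  rw [W2, W2sq_self_eq_zero hμ, Real.sqrt_zero]

lemma DF_continuous {DF : Measure (Ed d) → Ed d → ℝ} {L : ℝ} (hlip : FlatLip DF L)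
    {μ : Measure (Ed d)} (hμ : P2 μ) : Continuous (DF μ) := by
  refine (LipschitzWith.of_dist_le_mul (K := |L|.toNNReal) (f := DF μ) fun x y => ?_).continuous
  have h := hlip μ μ x y hμ hμ
  rw [W2_self_eq_zero hμ, add_zero] at h
  have hd : dist (DF μ x) (DF μ y) = |DF μ x - DF μ y| := Real.dist_eq _ _
  have hxy : dist x y = ‖x - y‖ := dist_eq_norm x y
  rw [hd, hxy]
  calc |DF μ x - DF μ y| ≤ L * ‖x - y‖ := by
        have h2 := hlip μ μ y x hμ hμ
        rw [W2_self_eq_zero hμ, add_zero] at h2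
        exact h2
    _ ≤ |L| * ‖x - y‖ := mul_le_mul_of_nonneg_right (le_abs_self L) (norm_nonneg _)
    _ = (|L|.toNNReal : ℝ) * ‖x - y‖ := by
        rw [Real.coe_toNNReal _ (abs_nonneg L)]

lemma integrable_of_bounded {m : Measure (Ed d)} [IsProbabilityMeasure m]
    {g : Ed d → ℝ} (hg : Continuous g) {C : ℝ} (hb : ∀ x, |g x| ≤ C) :
    Integrable g m := by
  refine Integrable.mono' (integrable_const C) hg.aestronglyMeasurable ?_
  exact Filter.Eventually.of_forall fun x => by simpa [Real.norm_eq_abs] using hb x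

/-! ### proxGibbs as a tilted measure -/

lemma proxGibbs_eq_tilted (DF : Measure (Ed d) → Ed d → ℝ) (U : Ed d → ℝ) (σ : ℝ)
    (hU : Integrable (fun x => Real.exp (-U x)) (volume : Measure (Ed d)))
    (ν : Measure (Ed d)) :
    proxGibbs DF U σ ν = (gibbs U).tilted (fun x => -(σ⁻¹ * DF ν x)) := by
  rw [proxGibbs, gibbs_eq_tilted, gibbs_eq_tilted,
    tilted_tilted (by simpa using hU)]
  congr 1
  funext x
  simp only [Pi.add_apply]
  ring

lemma KL_self (P : Measure (Ed d)) [IsProbabilityMeasure P] : KL P P = 0 := by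
  have hac : P ≪ P := Measure.AbsolutelyContinuous.refl P
  have h0 : llr P P =ᵐ[P] 0 := by
    filter_upwards [Measure.rnDeriv_self P] with x hx
    simp [llr, hx]
  have hint : Integrable (llr P P) P := (integrable_const (0:ℝ)).congr h0.symm
  rw [KL_eq, if_pos ⟨hac, hint⟩, integral_congr_ae h0]
  simp

/-! ### Convexity of relative entropy along mixtures -/

lemma sub_one_le_mul_log {y : ℝ} (hy : 0 ≤ y) : y - 1 ≤ y * Real.log y := by
  rcases eq_or_lt_of_le hy with h | h
  · simp [← h]
  · have hlog := Real.log_le_sub_one_of_pos (inv_pos.mpr h)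
    rw [Real.log_inv] at hlog
    have h' : y ≠ 0 := ne_of_gt h
    have : -(y * Real.log y) ≤ y * (y⁻¹ - 1) := by
      have := mul_le_mul_of_nonneg_left hlog (le_of_lt h)
      calc -(y * Real.log y) = y * (-Real.log y) := by ring
        _ ≤ y * (y⁻¹ - 1) := this
    have hyy : y * (y⁻¹ - 1) = 1 - y := by field_simp
    linarith [this, hyy ▸ this]

lemma isFiniteMeasure_ofReal_smul {c : ℝ} (μ : Measure (Ed d)) [IsFiniteMeasure μ] :
    IsFiniteMeasure (ENNReal.ofReal c • μ) := by
  constructor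
  rw [Measure.smul_apply, smul_eq_mul]
  exact ENNReal.mul_lt_top ENNReal.ofReal_lt_top (measure_lt_top _ _)

/-- Transfer: `∫ llr ρ P dρ = ∫ f log f dP`. -/
lemma llr_transfer_integrable_iff {P ρ : Measure (Ed d)} [IsFiniteMeasure ρ]
    [IsFiniteMeasure P] (hρ : ρ ≪ P) :
    Integrable (fun x => (ρ.rnDeriv P x).toReal * Real.log ((ρ.rnDeriv P x).toReal)) P
      ↔ Integrable (llr ρ P) ρ := by
  have := integrable_rnDeriv_smul_iff (ν := P) (f := llr ρ P) hρ
  simpa [llr, smul_eq_mul] using this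

lemma llr_transfer_integral {P ρ : Measure (Ed d)} [IsFiniteMeasure ρ]
    [IsFiniteMeasure P] (hρ : ρ ≪ P) :
    ∫ x, (ρ.rnDeriv P x).toReal * Real.log ((ρ.rnDeriv P x).toReal) ∂P
      = ∫ x, llr ρ P x ∂ρ := by
  have := integral_rnDeriv_smul (ν := P) (f := llr ρ P) hρ
  simpa [llr, smul_eq_mul] using this

lemma mix_prob {μ1 μ2 : Measure (Ed d)} [IsProbabilityMeasure μ1] [IsProbabilityMeasure μ2]
    {ε : ℝ} (hε0 : 0 < ε) (hε1 : ε < 1) :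
    IsProbabilityMeasure (ENNReal.ofReal (1 - ε) • μ1 + ENNReal.ofReal ε • μ2) := by
  constructor
  rw [Measure.add_apply, Measure.smul_apply, Measure.smul_apply, smul_eq_mul, smul_eq_mul]
  simp only [measure_univ, mul_one]
  rw [← ENNReal.ofReal_add (by linarith) (le_of_lt hε0)]
  norm_num

lemma mix_KL {P μ1 μ2 : Measure (Ed d)} [IsProbabilityMeasure P]
    [IsProbabilityMeasure μ1] [IsProbabilityMeasure μ2]
    (h1 : μ1 ≪ P) (i1 : Integrable (llr μ1 P) μ1)
    (h2 : μ2 ≪ P) (i2 : Integrable (llr μ2 P) μ2)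
    {ε : ℝ} (hε0 : 0 < ε) (hε1 : ε < 1) :
    (ENNReal.ofReal (1 - ε) • μ1 + ENNReal.ofReal ε • μ2) ≪ P ∧
    Integrable (llr (ENNReal.ofReal (1 - ε) • μ1 + ENNReal.ofReal ε • μ2) P)
      (ENNReal.ofReal (1 - ε) • μ1 + ENNReal.ofReal ε • μ2) ∧
    ∫ x, llr (ENNReal.ofReal (1 - ε) • μ1 + ENNReal.ofReal ε • μ2) P x
        ∂(ENNReal.ofReal (1 - ε) • μ1 + ENNReal.ofReal ε • μ2)
      ≤ (1 - ε) * ∫ x, llr μ1 P x ∂μ1 + ε * ∫ x, llr μ2 P x ∂μ2 := by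
  classical
  set m : Measure (Ed d) := ENNReal.ofReal (1 - ε) • μ1 + ENNReal.ofReal ε • μ2 with hm
  haveI : IsProbabilityMeasure m := mix_prob hε0 hε1
  haveI : IsFiniteMeasure (ENNReal.ofReal (1 - ε) • μ1) := isFiniteMeasure_ofReal_smul μ1
  haveI : IsFiniteMeasure (ENNReal.ofReal ε • μ2) := isFiniteMeasure_ofReal_smul μ2
  have hmac : m ≪ P := by
    intro s hs
    rw [hm, Measure.add_apply, Measure.smul_apply, Measure.smul_apply]
    rw [h1 hs, h2 hs]
    simp
  set f1 : Ed d → ℝ := fun x => (μ1.rnDeriv P x).toReal with hf1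
  set f2 : Ed d → ℝ := fun x => (μ2.rnDeriv P x).toReal with hf2
  set fm : Ed d → ℝ := fun x => (m.rnDeriv P x).toReal with hfmdef
  have hadd : m.rnDeriv P =ᵐ[P]
      (ENNReal.ofReal (1 - ε) • μ1.rnDeriv P) + (ENNReal.ofReal ε • μ2.rnDeriv P) := by
    have h0 := Measure.rnDeriv_add (ENNReal.ofReal (1 - ε) • μ1) (ENNReal.ofReal ε • μ2) P
    have ha := Measure.rnDeriv_smul_left_of_ne_top μ1 P
      (r := ENNReal.ofReal (1 - ε)) ENNReal.ofReal_ne_top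
    have hb := Measure.rnDeriv_smul_left_of_ne_top μ2 P
      (r := ENNReal.ofReal ε) ENNReal.ofReal_ne_top
    filter_upwards [h0, ha, hb] with x hx hxa hxb
    show m.rnDeriv P x = _
    rw [hm, hx]
    simp only [Pi.add_apply]
    rw [hxa, hxb]
  have hfm : fm =ᵐ[P] fun x => (1 - ε) * f1 x + ε * f2 x := by
    filter_upwards [hadd, Measure.rnDeriv_lt_top μ1 P, Measure.rnDeriv_lt_top μ2 P]
      with x hx h1t h2t
    rw [hfmdef]
    simp only [hx, Pi.add_apply, Pi.smul_apply, smul_eq_mul]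
    rw [ENNReal.toReal_add (ENNReal.mul_ne_top ENNReal.ofReal_ne_top h1t.ne)
      (ENNReal.mul_ne_top ENNReal.ofReal_ne_top h2t.ne), ENNReal.toReal_mul,
      ENNReal.toReal_mul, ENNReal.toReal_ofReal (by linarith), ENNReal.toReal_ofReal
      (le_of_lt hε0)]
  have hφ1 : Integrable (fun x => f1 x * Real.log (f1 x)) P :=
    (llr_transfer_integrable_iff h1).mpr i1
  have hφ2 : Integrable (fun x => f2 x * Real.log (f2 x)) P :=
    (llr_transfer_integrable_iff h2).mpr i2
  have hfmint : Integrable fm P := Measure.integrable_toReal_rnDeriv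
  have hf1nn : ∀ x, 0 ≤ f1 x := fun x => ENNReal.toReal_nonneg
  have hf2nn : ∀ x, 0 ≤ f2 x := fun x => ENNReal.toReal_nonneg
  have hfmnn : ∀ x, 0 ≤ fm x := fun x => ENNReal.toReal_nonneg
  have hconv : ∀ᵐ x ∂P, fm x * Real.log (fm x)
      ≤ (1 - ε) * (f1 x * Real.log (f1 x)) + ε * (f2 x * Real.log (f2 x)) := by
    filter_upwards [hfm] with x hx
    have := convexOn_mul_log.2 (Set.mem_Ici.mpr (hf1nn x)) (Set.mem_Ici.mpr (hf2nn x))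
      (by linarith : (0:ℝ) ≤ 1 - ε) (le_of_lt hε0) (by ring)
    simpa [smul_eq_mul, hx] using this
  have hdom : Integrable (fun x => (1 - ε) * |f1 x * Real.log (f1 x)|
      + ε * |f2 x * Real.log (f2 x)| + (1 + fm x)) P := by
    exact ((hφ1.abs.const_mul _).add (hφ2.abs.const_mul _)).add
      ((integrable_const (1:ℝ)).add hfmint)
  have hφm : Integrable (fun x => fm x * Real.log (fm x)) P := by
    refine Integrable.mono' hdom
      (Real.continuous_mul_log.comp_aestronglyMeasurable
        (Measure.measurable_rnDeriv m P).ennreal_toReal.aestronglyMeasurable) ?_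
    filter_upwards [hconv] with x hx
    rw [Real.norm_eq_abs, abs_le]
    constructor
    · have hlb := sub_one_le_mul_log (hfmnn x)
      have e1 : (0:ℝ) ≤ (1 - ε) * |f1 x * Real.log (f1 x)| :=
        mul_nonneg (by linarith) (abs_nonneg _)
      have e2 : (0:ℝ) ≤ ε * |f2 x * Real.log (f2 x)| :=
        mul_nonneg (le_of_lt hε0) (abs_nonneg _)
      linarith [hfmnn x]
    · have e1 : (1 - ε) * (f1 x * Real.log (f1 x)) ≤ (1 - ε) * |f1 x * Real.log (f1 x)| :=
        mul_le_mul_of_nonneg_left (le_abs_self _) (by linarith)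
      have e2 : ε * (f2 x * Real.log (f2 x)) ≤ ε * |f2 x * Real.log (f2 x)| :=
        mul_le_mul_of_nonneg_left (le_abs_self _) (le_of_lt hε0)
      have e3 : (0:ℝ) ≤ 1 + fm x := by linarith [hfmnn x]
      linarith
  have hint_m : Integrable (llr m P) m := (llr_transfer_integrable_iff hmac).mp hφm
  refine ⟨hmac, hint_m, ?_⟩
  have hIm : ∫ x, llr m P x ∂m = ∫ x, fm x * Real.log (fm x) ∂P :=
    (llr_transfer_integral hmac).symm
  have hI1 : ∫ x, llr μ1 P x ∂μ1 = ∫ x, f1 x * Real.log (f1 x) ∂P :=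
    (llr_transfer_integral h1).symm
  have hI2 : ∫ x, llr μ2 P x ∂μ2 = ∫ x, f2 x * Real.log (f2 x) ∂P :=
    (llr_transfer_integral h2).symm
  rw [hIm, hI1, hI2]
  have hmono := integral_mono_ae hφm ((hφ1.const_mul _).add (hφ2.const_mul _)) hconv
  simp only [Pi.add_apply] at hmono
  rw [integral_add (hφ1.const_mul _) (hφ2.const_mul _), integral_const_mul,
    integral_const_mul] at hmono
  exact hmono

lemma FSigma_eq_coe {F : Measure (Ed d) → ℝ} {P : Measure (Ed d)} {σ : ℝ}
    {μ : Measure (Ed d)} (hac : μ ≪ P) (hint : Integrable (llr μ P) μ)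
    (hr : 0 ≤ ∫ x, llr μ P x ∂μ) :
    FSigma F P σ μ = ((F μ + σ * ∫ x, llr μ P x ∂μ : ℝ) : EReal) := by
  rw [FSigma, KL_eq, if_pos ⟨hac, hint⟩, EReal.coe_ennreal_ofReal, max_eq_left hr]
  norm_cast

lemma FSigma_eq_top {F : Measure (Ed d) → ℝ} {P : Measure (Ed d)} {σ : ℝ}
    {μ : Measure (Ed d)} (hσ : 0 < σ) (hbad : ¬(μ ≪ P ∧ Integrable (llr μ P) μ)) :
    FSigma F P σ μ = ⊤ := by
  rw [FSigma, KL_eq, if_neg hbad, EReal.coe_ennreal_top, EReal.coe_mul_top_of_pos hσ]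
  exact EReal.coe_add_top _

lemma coe_mul_KL_of_branch {P μ : Measure (Ed d)} {σ : ℝ} (hσ : 0 < σ)
    (hac : μ ≪ P) (hint : Integrable (llr μ P) μ) (hr : 0 ≤ ∫ x, llr μ P x ∂μ) :
    (σ : EReal) * (KL μ P : EReal) = ((σ * ∫ x, llr μ P x ∂μ : ℝ) : EReal) := by
  rw [KL_eq, if_pos ⟨hac, hint⟩, EReal.coe_ennreal_ofReal, max_eq_left hr]
  norm_cast

end EntropySandwich


/-- **Entropy sandwich lemma** (Lemma 2.5). Under flat convexity of `F`,
Lipschitzness/boundedness of the flat derivative, and `π ∝ e^{-U}` with `U` continuously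
differentiable, bounded below and of at least quadratic growth, the unique (absolutely
continuous) minimizer `μ*_σ` of `F^σ` satisfies, for every `μ ∈ P₂(ℝ^d)`,
`σ KL(μ|μ*_σ) ≤ F^σ(μ) - F^σ(μ*_σ) ≤ σ KL(μ|Φ[μ])`. -/
theorem entropy_sandwich {d : ℕ}
    (F : Measure (Ed d) → ℝ) (DF : Measure (Ed d) → Ed d → ℝ)
    (U : Ed d → ℝ) (π : Measure (Ed d))
    (L_F C_F σ : ℝ)
    -- F ∈ C¹ with flat derivative DF, flat-convex
    (hflat : IsFlatDeriv F DF)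
    (hconv : FlatConvex F DF)
    -- Lipschitzness and boundedness of the flat derivative
    (hlip : FlatLip DF L_F)
    (hbdd : FlatBdd DF C_F)
    -- π ∝ e^{-U} with U C¹, bounded below, of at least quadratic growth
    (hπ : π = gibbs U)
    (hUc1 : ContDiff ℝ 1 U)
    (hUbd : UBoundedBelow U)
    (hUquad : UQuadGrowth U)
    (hσ : 0 < σ)
    -- μ*_σ is the unique minimizer of F^σ over P₂, absolutely continuous
    (μstar : Measure (Ed d))
    (hstarP2 : P2 μstar) (hstarac : μstar ≪ volume)
    (hstarmin : ∀ μ : Measure (Ed d), P2 μ → FSigma F π σ μstar ≤ FSigma F π σ μ)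
    (hstaruniq : ∀ μ : Measure (Ed d), P2 μ →
      FSigma F π σ μ ≤ FSigma F π σ μstar → μ = μstar) :
    ∀ μ : Measure (Ed d), P2 μ →
      (σ : EReal) * (KL μ μstar : EReal) ≤ FSigma F π σ μ - FSigma F π σ μstar ∧
      FSigma F π σ μ - FSigma F π σ μstar ≤
        (σ : EReal) * (KL μ (proxGibbs DF U σ μ) : EReal) := by
  classical
  have hUcont : Continuous U := hUc1.continuous
  have hρint : Integrable (fun x => Real.exp (-U x)) (volume : Measure (Ed d)) := by
    have := EntropySandwich.integrable_weight_exp_neg (g := fun _ => (1:ℝ)) hUcont hUquad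
      continuous_const (A := 1) (B := 0) zero_le_one le_rfl (fun x => by norm_num)
    simpa using this
  have hπP2 : P2 π := by rw [hπ]; exact EntropySandwich.P2_gibbs hUcont hUquad
  haveI hπprob : IsProbabilityMeasure π := hπP2.1
  haveI hμsprob : IsProbabilityMeasure μstar := hstarP2.1
  have hσinv : (0:ℝ) < σ⁻¹ := inv_pos.mpr hσ
  -- C_F is nonnegative
  have hCF : 0 ≤ C_F := le_trans (abs_nonneg _) (hbdd μstar 0 hstarP2)
  -- continuity of flat derivatives
  have hDFc : ∀ ν : Measure (Ed d), P2 ν → Continuous (DF ν) :=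
    fun ν hν => EntropySandwich.DF_continuous hlip hν
  -- the tilt functions
  set g : Measure (Ed d) → Ed d → ℝ := fun ν x => -(σ⁻¹ * DF ν x) with hgdef
  have hgc : ∀ ν : Measure (Ed d), P2 ν → Continuous (g ν) :=
    fun ν hν => (continuous_const.mul (hDFc ν hν)).neg
  have hgb : ∀ (ν : Measure (Ed d)) (x : Ed d), P2 ν → |g ν x| ≤ σ⁻¹ * C_F := by
    intro ν x hν
    rw [hgdef]
    simp only [abs_neg, abs_mul, abs_of_pos hσinv]
    exact mul_le_mul_of_nonneg_left (hbdd ν x hν) hσinv.le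
  have hgint : ∀ (ν m : Measure (Ed d)), P2 ν → IsProbabilityMeasure m →
      Integrable (g ν) m := by
    intro ν m hν hm
    haveI := hm
    exact EntropySandwich.integrable_of_bounded (hgc ν hν) (fun x => hgb ν x hν)
  have hexpg : ∀ ν : Measure (Ed d), P2 ν →
      Integrable (fun x => Real.exp (g ν x)) π := by
    intro ν hν
    refine EntropySandwich.integrable_of_bounded (Real.continuous_exp.comp (hgc ν hν))
      (C := Real.exp (σ⁻¹ * C_F)) (fun x => ?_)
    rw [abs_of_pos (Real.exp_pos _), Real.exp_le_exp]
    exact le_trans (le_abs_self _) (hgb ν x hν)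
  -- proxGibbs as tilted measure
  have hprox : ∀ ν : Measure (Ed d), proxGibbs DF U σ ν = π.tilted (g ν) := by
    intro ν
    rw [hπ]
    exact EntropySandwich.proxGibbs_eq_tilted DF U σ hρint ν
  have hproxprob : ∀ ν : Measure (Ed d), P2 ν →
      IsProbabilityMeasure (proxGibbs DF U σ ν) := by
    intro ν hν
    rw [hprox ν]
    exact isProbabilityMeasure_tilted (hexpg ν hν)
  -- the log-partition of the tilts
  set Λ : Measure (Ed d) → ℝ := fun ν => Real.log (∫ x, Real.exp (g ν x) ∂π) with hΛdef
  -- computation of llr with respect to proxGibbs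
  have hcomp : ∀ (ν ρ : Measure (Ed d)), P2 ν → IsProbabilityMeasure ρ →
      ρ ≪ π → Integrable (llr ρ π) ρ →
      ρ ≪ proxGibbs DF U σ ν ∧ Integrable (llr ρ (proxGibbs DF U σ ν)) ρ ∧
        ∫ x, llr ρ (proxGibbs DF U σ ν) x ∂ρ
          = ∫ x, llr ρ π x ∂ρ - ∫ x, g ν x ∂ρ + Λ ν := by
    intro ν ρ hν hρ hρπ hρint
    haveI := hρ
    refine ⟨?_, ?_, ?_⟩
    · rw [hprox ν]
      exact hρπ.trans (absolutelyContinuous_tilted (hexpg ν hν))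
    · rw [hprox ν]
      exact integrable_llr_tilted_right hρπ (hgint ν ρ hν hρ) hρint (hexpg ν hν)
    · rw [hprox ν, hΛdef]
      exact integral_llr_tilted_right hρπ (hgint ν ρ hν hρ) (hexpg ν hν) hρint
  -- KL(μ*|π) is finite
  have hKLππ : KL π π = 0 := EntropySandwich.KL_self π
  have hstarbranch : μstar ≪ π ∧ Integrable (llr μstar π) μstar := by
    by_contra hbad
    have hmin := hstarmin π hπP2
    have hFSπ : FSigma F π σ π = ((F π : ℝ) : EReal) := by
      rw [FSigma, hKLππ]
      simp
    rw [hFSπ, EntropySandwich.FSigma_eq_top hσ hbad] at hmin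
    exact EReal.coe_ne_top _ (top_le_iff.mp hmin)
  obtain ⟨hsac, hsint⟩ := hstarbranch
  set klrs := ∫ x, llr μstar π x ∂μstar with hklrs
  have hklrs_nn : 0 ≤ klrs := EntropySandwich.llr_integral_nonneg hsac hsint
  have hFSstar : FSigma F π σ μstar = ((F μstar + σ * klrs : ℝ) : EReal) :=
    EntropySandwich.FSigma_eq_coe hsac hsint hklrs_nn
  -- ==== the fixed point: μstar = proxGibbs DF U σ μstar ====
  set Φs : Measure (Ed d) := proxGibbs DF U σ μstar with hΦsdef
  haveI hΦsprob : IsProbabilityMeasure Φs := hproxprob μstar hstarP2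
  have hΦsP2 : P2 Φs := by
    rw [hΦsdef, proxGibbs]
    refine EntropySandwich.P2_gibbs ((continuous_const.mul (hDFc μstar hstarP2)).add hUcont) ?_
    obtain ⟨c, hc, R, hR⟩ := hUquad
    refine ⟨c / 2, by linarith, max R (Real.sqrt (2 * (σ⁻¹ * C_F) / c) + 1), fun x hx => ?_⟩
    have hx1 : R ≤ ‖x‖ := le_trans (le_max_left _ _) hx
    have hx2 : Real.sqrt (2 * (σ⁻¹ * C_F) / c) ≤ ‖x‖ := by
      have h := le_max_right R (Real.sqrt (2 * (σ⁻¹ * C_F) / c) + 1)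
      linarith [le_trans h hx]
    have hK : (0:ℝ) ≤ 2 * (σ⁻¹ * C_F) / c := by positivity
    have hxsq : 2 * (σ⁻¹ * C_F) / c ≤ ‖x‖ ^ 2 := by
      have h0 : Real.sqrt (2 * (σ⁻¹ * C_F) / c) ^ 2 = 2 * (σ⁻¹ * C_F) / c := Real.sq_sqrt hK
      nlinarith [Real.sqrt_nonneg (2 * (σ⁻¹ * C_F) / c), norm_nonneg x]
    have hDb : -(σ⁻¹ * C_F) ≤ σ⁻¹ * DF μstar x := by
      have := hbdd μstar x hstarP2
      nlinarith [neg_abs_le (DF μstar x), hσinv.le]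
    have hU' : c * ‖x‖ ^ 2 ≤ U x := hR x hx1
    have hcne : c ≠ 0 := ne_of_gt hc
    have hcan : c / 2 * (2 * (σ⁻¹ * C_F) / c) = σ⁻¹ * C_F := by
      field_simp
    have hmul := mul_le_mul_of_nonneg_left hxsq (by linarith : (0:ℝ) ≤ c / 2)
    rw [hcan] at hmul
    linarith
  -- branch of Φs w.r.t. π, and its llr value
  have hΦsac : Φs ≪ π := by
    rw [hΦsdef, hprox μstar]
    exact tilted_absolutelyContinuous π _
  have hΦsllr : llr Φs π =ᵐ[Φs] fun x => g μstar x - Λ μstar := by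
    have h1 : llr (π.tilted (g μstar)) π
        =ᵐ[π] fun x => g μstar x - Real.log (∫ z, Real.exp (g μstar z) ∂π) + llr π π x :=
      llr_tilted_left (Measure.AbsolutelyContinuous.refl π) (hexpg μstar hstarP2)
        ((hgc μstar hstarP2).measurable.aemeasurable)
    have h2 : llr π π =ᵐ[π] 0 := by
      filter_upwards [Measure.rnDeriv_self π] with x hx
      simp [llr, hx]
    have h3 : llr (π.tilted (g μstar)) π =ᵐ[π] fun x => g μstar x - Λ μstar := by
      filter_upwards [h1, h2] with x hx1 hx2
      rw [hx1, hx2, hΛdef]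
      simp
    have h4 : llr (π.tilted (g μstar)) π =ᵐ[π.tilted (g μstar)]
        fun x => g μstar x - Λ μstar :=
      (tilted_absolutelyContinuous π (g μstar)).ae_le h3
    rw [hΦsdef, hprox μstar]
    exact h4
  have hΦsint : Integrable (llr Φs π) Φs := by
    refine Integrable.congr (f := fun x => g μstar x - Λ μstar) ?_ hΦsllr.symm
    exact (hgint μstar Φs hstarP2 hΦsprob).sub (integrable_const _)
  set klrf := ∫ x, llr Φs π x ∂Φs with hklrf
  have hgΦs : ∫ x, g μstar x ∂Φs = -(σ⁻¹ * ∫ x, DF μstar x ∂Φs) := by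
    rw [hgdef]
    rw [integral_neg, integral_const_mul]
  have hklrf_eq : klrf = ∫ x, g μstar x ∂Φs - Λ μstar := by
    rw [hklrf, integral_congr_ae hΦsllr,
      integral_sub (hgint μstar Φs hstarP2 hΦsprob) (integrable_const _)]
    simp
  -- centered derivative
  have hcent : ∀ ν : Measure (Ed d), P2 ν → ∫ x, DF ν x ∂ν = 0 := hflat.centered
  -- perturbation inequality
  have hpert : σ * (klrs - klrf) ≤ ∫ x, DF μstar x ∂Φs - ∫ x, DF μstar x ∂μstar := by
    have hlim := hflat.limit μstar Φs hstarP2 hΦsP2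
    refine ge_of_tendsto hlim ?_
    filter_upwards [Ioo_mem_nhdsGT_of_mem (by norm_num : (0:ℝ) ∈ Set.Ico 0 1)] with ε hε
    obtain ⟨hε0, hε1⟩ := hε
    obtain ⟨hmac, hmint, hmle⟩ := EntropySandwich.mix_KL hsac hsint hΦsac hΦsint hε0 hε1
    set m : Measure (Ed d) := ENNReal.ofReal (1 - ε) • μstar + ENNReal.ofReal ε • Φs with hmdef
    haveI hmprob : IsProbabilityMeasure m := EntropySandwich.mix_prob hε0 hε1
    have hmP2 : P2 m := by
      refine ⟨hmprob, ?_⟩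
      exact (hstarP2.2.smul_measure ENNReal.ofReal_ne_top).add_measure
        (hΦsP2.2.smul_measure ENNReal.ofReal_ne_top)
    have hklm_nn : 0 ≤ ∫ x, llr m π x ∂m := EntropySandwich.llr_integral_nonneg hmac hmint
    have h := hstarmin m hmP2
    rw [hFSstar, EntropySandwich.FSigma_eq_coe hmac hmint hklm_nn] at h
    have hreal : F μstar + σ * klrs ≤ F m + σ * ∫ x, llr m π x ∂m :=
      EReal.coe_le_coe_iff.mp h
    have hconvKL : ∫ x, llr m π x ∂m ≤ (1 - ε) * klrs + ε * klrf := hmle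
    have h2 : σ * ε * (klrs - klrf) ≤ F m - F μstar := by nlinarith
    rw [le_div_iff₀ hε0]
    nlinarith
  -- conclude klrs + Λ μstar = 0 and the fixed point
  have hklrf_eq2 : klrf = -(σ⁻¹ * ∫ x, DF μstar x ∂Φs) - Λ μstar := by
    rw [hklrf_eq, hgΦs]
  have hkey : klrs + Λ μstar ≤ 0 := by
    rw [hcent μstar hstarP2] at hpert
    have hss : σ * σ⁻¹ = 1 := mul_inv_cancel₀ (ne_of_gt hσ)
    have h0 : σ * (σ⁻¹ * ∫ x, DF μstar x ∂Φs) = ∫ x, DF μstar x ∂Φs := by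
      rw [← mul_assoc, hss, one_mul]
    have hklrf3 : σ * klrf = -(∫ x, DF μstar x ∂Φs) - σ * Λ μstar := by
      rw [hklrf_eq2]
      linear_combination -h0
    have h3 : σ * (klrs - klrf) = σ * klrs - σ * klrf := by ring
    have h4 : σ * (klrs + Λ μstar) = σ * klrs + σ * Λ μstar := by ring
    have h2 : σ * (klrs + Λ μstar) ≤ 0 := by linarith [hpert, hklrf3, h3, h4]
    nlinarith [h2, hσ]
  have hμsΦs : μstar ≪ Φs ∧ Integrable (llr μstar Φs) μstar ∧
      ∫ x, llr μstar Φs x ∂μstar = klrs - ∫ x, g μstar x ∂μstar + Λ μstar := by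
    have := hcomp μstar μstar hstarP2 hμsprob hsac hsint
    rwa [← hΦsdef] at this
  obtain ⟨hsf_ac, hsf_int, hsf_val⟩ := hμsΦs
  have hgμs : ∫ x, g μstar x ∂μstar = 0 := by
    rw [hgdef]
    rw [integral_neg, integral_const_mul, hcent μstar hstarP2]
    simp
  have hsf_val2 : ∫ x, llr μstar Φs x ∂μstar = klrs + Λ μstar := by
    rw [hsf_val, hgμs]
    ring
  have hfix : μstar = Φs := by
    refine EntropySandwich.eq_of_llr_integral_nonpos hsf_ac hsf_int ?_
    rw [hsf_val2]
    exact hkey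
  have hkey0 : klrs + Λ μstar = 0 := by
    have h0 := EntropySandwich.llr_integral_nonneg hsf_ac hsf_int
    rw [hsf_val2] at h0
    linarith
  -- ==== main estimates ====
  intro μ hμ
  haveI hμprob : IsProbabilityMeasure μ := hμ.1
  haveI hΦμprob : IsProbabilityMeasure (proxGibbs DF U σ μ) := hproxprob μ hμ
  by_cases hbranch : μ ≪ π ∧ Integrable (llr μ π) μ
  · -- finite relative entropy case
    obtain ⟨hμπ, hμint⟩ := hbranch
    set klrm := ∫ x, llr μ π x ∂μ with hklrm
    have hklrm_nn : 0 ≤ klrm := EntropySandwich.llr_integral_nonneg hμπ hμint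
    have hFSμ : FSigma F π σ μ = ((F μ + σ * klrm : ℝ) : EReal) :=
      EntropySandwich.FSigma_eq_coe hμπ hμint hklrm_nn
    have hdiff : FSigma F π σ μ - FSigma F π σ μstar
        = (((F μ + σ * klrm) - (F μstar + σ * klrs) : ℝ) : EReal) := by
      rw [hFSμ, hFSstar, EReal.coe_sub]
    have hgμμ : ∫ x, g μ x ∂μ = 0 := by
      rw [hgdef, integral_neg, integral_const_mul, hcent μ hμ]
      simp
    constructor
    · -- lower bound
      obtain ⟨hμf_ac, hμf_int, hμf_val⟩ := hcomp μstar μ hstarP2 hμprob hμπ hμint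
      rw [← hΦsdef] at hμf_ac hμf_int hμf_val
      have ha_nn : 0 ≤ ∫ x, llr μ Φs x ∂μ :=
        EntropySandwich.llr_integral_nonneg hμf_ac hμf_int
      have hLHS : (σ : EReal) * (KL μ μstar : EReal)
          = ((σ * ∫ x, llr μ Φs x ∂μ : ℝ) : EReal) := by
        rw [hfix]
        exact EntropySandwich.coe_mul_KL_of_branch hσ hμf_ac hμf_int ha_nn
      rw [hLHS, hdiff, EReal.coe_le_coe_iff]
      -- real inequality
      have hgμ : ∫ x, g μstar x ∂μ = -(σ⁻¹ * ∫ x, DF μstar x ∂μ) := by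
        rw [hgdef, integral_neg, integral_const_mul]
      have hval : ∫ x, llr μ Φs x ∂μ = klrm + σ⁻¹ * ∫ x, DF μstar x ∂μ + Λ μstar := by
        rw [hμf_val, hgμ]
        ring
      have hconv1 : ∫ x, DF μstar x ∂μ - ∫ x, DF μstar x ∂μstar ≤ F μ - F μstar :=
        hconv μstar μ hstarP2 hμ
      rw [hcent μstar hstarP2] at hconv1
      have hss : σ * σ⁻¹ = 1 := mul_inv_cancel₀ (ne_of_gt hσ)
      have h0 : σ * (σ⁻¹ * ∫ x, DF μstar x ∂μ) = ∫ x, DF μstar x ∂μ := by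
        rw [← mul_assoc, hss, one_mul]
      have hΛs : Λ μstar = -klrs := by linarith
      rw [hval, hΛs]
      have hexpand : σ * (klrm + σ⁻¹ * ∫ x, DF μstar x ∂μ + -klrs)
          = σ * klrm + ∫ x, DF μstar x ∂μ - σ * klrs := by
        linear_combination h0
      linarith [hexpand, hconv1]
    · -- upper bound
      obtain ⟨hμΦ_ac, hμΦ_int, hμΦ_val⟩ := hcomp μ μ hμ hμprob hμπ hμint
      have hb_nn : 0 ≤ ∫ x, llr μ (proxGibbs DF U σ μ) x ∂μ :=
        EntropySandwich.llr_integral_nonneg hμΦ_ac hμΦ_int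
      have hRHS : (σ : EReal) * (KL μ (proxGibbs DF U σ μ) : EReal)
          = ((σ * ∫ x, llr μ (proxGibbs DF U σ μ) x ∂μ : ℝ) : EReal) :=
        EntropySandwich.coe_mul_KL_of_branch hσ hμΦ_ac hμΦ_int hb_nn
      rw [hRHS, hdiff, EReal.coe_le_coe_iff]
      have hval : ∫ x, llr μ (proxGibbs DF U σ μ) x ∂μ = klrm + Λ μ := by
        rw [hμΦ_val, hgμμ]
        ring
      -- key: 0 ≤ ∫ llr μstar (proxGibbs μ) dμstar = klrs + σ⁻¹ ∫ DF μ dμstar + Λ μ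
      obtain ⟨hsΦ_ac, hsΦ_int, hsΦ_val⟩ := hcomp μ μstar hμ hμsprob hsac hsint
      have hc_nn : 0 ≤ ∫ x, llr μstar (proxGibbs DF U σ μ) x ∂μstar :=
        EntropySandwich.llr_integral_nonneg hsΦ_ac hsΦ_int
      have hgμs2 : ∫ x, g μ x ∂μstar = -(σ⁻¹ * ∫ x, DF μ x ∂μstar) := by
        rw [hgdef, integral_neg, integral_const_mul]
      have hval2 : ∫ x, llr μstar (proxGibbs DF U σ μ) x ∂μstar
          = klrs + σ⁻¹ * ∫ x, DF μ x ∂μstar + Λ μ := by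
        rw [hsΦ_val, hgμs2]
        ring
      rw [hval2] at hc_nn
      have hconv2 : ∫ x, DF μ x ∂μstar - ∫ x, DF μ x ∂μ ≤ F μstar - F μ :=
        hconv μ μstar hμ hstarP2
      rw [hcent μ hμ] at hconv2
      have hss : σ * σ⁻¹ = 1 := mul_inv_cancel₀ (ne_of_gt hσ)
      have h0 : σ * (σ⁻¹ * ∫ x, DF μ x ∂μstar) = ∫ x, DF μ x ∂μstar := by
        rw [← mul_assoc, hss, one_mul]
      have hmul := mul_nonneg hσ.le hc_nn
      rw [hval]
      have hexpand2 : σ * (klrs + σ⁻¹ * ∫ x, DF μ x ∂μstar + Λ μ)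
          = σ * klrs + ∫ x, DF μ x ∂μstar + σ * Λ μ := by
        linear_combination h0
      have hexpand3 : σ * (klrm + Λ μ) = σ * klrm + σ * Λ μ := by ring
      linarith [hmul, hexpand2, hexpand3, hconv2]
  · -- infinite relative entropy case
    have hFSμtop : FSigma F π σ μ = ⊤ := EntropySandwich.FSigma_eq_top hσ hbranch
    have hdiff : FSigma F π σ μ - FSigma F π σ μstar = ⊤ := by
      rw [hFSμtop, hFSstar]
      exact EReal.top_sub_coe _
    constructor
    · rw [hdiff]
      exact le_top
    · -- KL μ (proxGibbs μ) = ⊤ as well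
      have hKLtop : KL μ (proxGibbs DF U σ μ) = ⊤ := by
        rw [EntropySandwich.KL_eq, if_neg ?_]
        rintro ⟨hacΦ, hintΦ⟩
        refine hbranch ⟨?_, ?_⟩
        · rw [hprox μ] at hacΦ
          exact hacΦ.trans (tilted_absolutelyContinuous π _)
        · have hμπ' : μ ≪ π := by
            rw [hprox μ] at hacΦ
            exact hacΦ.trans (tilted_absolutelyContinuous π _)
          have h1 : llr μ (π.tilted (g μ))
              =ᵐ[μ] fun x => - g μ x + Real.log (∫ z, Real.exp (g μ z) ∂π) + llr μ π x :=
            llr_tilted_right hμπ' (hexpg μ hμ)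
          have h2 : llr μ π =ᵐ[μ] fun x =>
              llr μ (proxGibbs DF U σ μ) x + g μ x - Real.log (∫ z, Real.exp (g μ z) ∂π) := by
            rw [hprox μ]
            filter_upwards [h1] with x hx
            rw [hx]
            ring
          refine Integrable.congr ?_ h2.symm
          exact (hintΦ.add (hgint μ μ hμ hμprob)).sub (integrable_const _)
      rw [hdiff, hKLtop, EReal.coe_ennreal_top, EReal.coe_mul_top_of_pos hσ]
end
end

section
/- Existence and uniqueness of the minimizer for the proximal point JKO step: let F : P2(R^d) → R be bounded below, admit a flat derivative, be flat-convex, and satisfy |δF/δμ(μ',x') − δF/δμ(μ,x)| ≤ L_F(|x'−x| + W2(μ',μ)) and |δF/δμ(μ,x)| ≤ C_F. Fix σ, τ > 0 and a reference probability measure π ∈ P2(R^d). Given μ^0 ∈ P2(R^d) with μ^0 ≪ π, there exists a unique minimizer μ^1 ≪ π in P2(R^d) of the functional μ ↦ F(μ) + σKL(μ|π) + (1/(2τ))W2²(μ,μ^0) over {μ ∈ P2(R^d): μ ≪ π}. -/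
open MeasureTheory Filter Set
open scoped ENNReal NNReal Topology RealInnerProductSpace Classical

noncomputable section

/-! ### Auxiliary machinery for the proximal point JKO theorem -/

namespace PP

open scoped ENNReal

variable {d : ℕ}

/-- Real-valued density of `μ` w.r.t. `π`. -/
def rde (π μ : Measure (Ed d)) (x : Ed d) : ℝ := (μ.rnDeriv π x).toReal

/-- The relative entropy integral. -/
def Ent (π μ : Measure (Ed d)) : ℝ := ∫ x, Real.log (rde π μ x) ∂μ

/-- The feasible set with finite entropy. -/
def Gd (π μ : Measure (Ed d)) : Prop :=
  P2 μ ∧ μ ≪ π ∧ Integrable (fun x => Real.log (rde π μ x)) μ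

/-- Squared Hellinger-type distance. -/
def Hsq (π μ ν : Measure (Ed d)) : ℝ :=
  ∫ x, (Real.sqrt (rde π μ x) - Real.sqrt (rde π ν x)) ^ 2 ∂π

/-- Midpoint (mixture) of two measures. -/
def mid (μ ν : Measure (Ed d)) : Measure (Ed d) :=
  (2⁻¹ : ℝ≥0∞) • μ + (2⁻¹ : ℝ≥0∞) • ν

/-- The transport cost function. -/
def cost (p : Ed d × Ed d) : ℝ := ‖p.1 - p.2‖ ^ 2

lemma rde_nonneg (π μ : Measure (Ed d)) (x : Ed d) : 0 ≤ rde π μ x :=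
  ENNReal.toReal_nonneg

lemma measurable_rde (π μ : Measure (Ed d)) : Measurable (rde π μ) :=
  (Measure.measurable_rnDeriv μ π).ennreal_toReal

lemma withDensity_rde (π μ : Measure (Ed d)) [SigmaFinite μ] [SigmaFinite π] (hac : μ ≪ π) :
    π.withDensity (fun x => ENNReal.ofReal (rde π μ x)) = μ := by
  have h1 : (fun x => ENNReal.ofReal (rde π μ x)) =ᵐ[π] μ.rnDeriv π := by
    filter_upwards [μ.rnDeriv_lt_top π] with x hx
    simp [rde, ENNReal.ofReal_toReal hx.ne]
  rw [withDensity_congr_ae h1, Measure.withDensity_rnDeriv_eq _ _ hac]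

lemma integral_density (π μ : Measure (Ed d)) [SigmaFinite μ] [SigmaFinite π] (hac : μ ≪ π)
    (g : Ed d → ℝ) : ∫ x, g x ∂μ = ∫ x, rde π μ x * g x ∂π := by
  have hm : Measurable (fun x => (rde π μ x).toNNReal) :=
    (measurable_rde π μ).real_toNNReal
  have h2 : π.withDensity (fun x => ((rde π μ x).toNNReal : ℝ≥0∞)) = μ := by
    rw [show (fun x => ((rde π μ x).toNNReal : ℝ≥0∞))
        = fun x => ENNReal.ofReal (rde π μ x) from rfl]
    exact withDensity_rde π μ hac
  conv_lhs => rw [← h2]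
  rw [integral_withDensity_eq_integral_smul hm g]
  refine integral_congr_ae (Eventually.of_forall fun x => ?_)
  simp [NNReal.smul_def, Real.coe_toNNReal _ (rde_nonneg π μ x)]

lemma integrable_density (π μ : Measure (Ed d)) [SigmaFinite μ] [SigmaFinite π] (hac : μ ≪ π)
    {g : Ed d → ℝ} :
    Integrable g μ ↔ Integrable (fun x => rde π μ x * g x) π := by
  have hm : AEMeasurable (fun x => (rde π μ x).toNNReal) π :=
    ((measurable_rde π μ).real_toNNReal).aemeasurable
  have h2 : π.withDensity (fun x => ((rde π μ x).toNNReal : ℝ≥0∞)) = μ := by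
    rw [show (fun x => ((rde π μ x).toNNReal : ℝ≥0∞))
        = fun x => ENNReal.ofReal (rde π μ x) from rfl]
    exact withDensity_rde π μ hac
  have key : Integrable g μ ↔ Integrable (fun x => (rde π μ x).toNNReal • g x) π := by
    conv_lhs => rw [← h2]
    exact integrable_withDensity_iff_integrable_smul₀ hm
  rw [key]
  constructor <;> intro h <;> refine h.congr (Eventually.of_forall fun x => ?_) <;>
    simp [NNReal.smul_def, Real.coe_toNNReal _ (rde_nonneg π μ x)]

lemma integral_rde (π μ : Measure (Ed d)) [IsProbabilityMeasure μ] [SigmaFinite π]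
    (hac : μ ≪ π) : ∫ x, rde π μ x ∂π = 1 := by
  have h := Measure.integral_toReal_rnDeriv hac
  simp only [measure_univ, ENNReal.toReal_one, probReal_univ] at h
  exact h

lemma sub_one_le_mul_log {t : ℝ} (ht : 0 ≤ t) : t - 1 ≤ t * Real.log t := by
  rcases eq_or_lt_of_le ht with h | h
  · simp [← h]
  · have h1 : Real.log (1 / t) ≤ 1 / t - 1 := Real.log_le_sub_one_of_pos (by positivity)
    rw [Real.log_div one_ne_zero (ne_of_gt h), Real.log_one] at h1
    have h2 : 1 - 1 / t ≤ Real.log t := by linarith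
    have h3 : t * (1 - 1 / t) ≤ t * Real.log t :=
      mul_le_mul_of_nonneg_left h2 ht
    have h4 : t * (1 - 1 / t) = t - 1 := by
      field_simp
    linarith

lemma entropy_gap {a b : ℝ} (ha : 0 ≤ a) (hb : 0 ≤ b) :
    (Real.sqrt a - Real.sqrt b) ^ 2 / 4 + ((a + b) / 2) * Real.log ((a + b) / 2)
      ≤ a * Real.log a / 2 + b * Real.log b / 2 := by
  have key : ∀ c m : ℝ, 0 ≤ c → 0 < m →
      c - m + (Real.sqrt c - Real.sqrt m) ^ 2 ≤ c * Real.log c - c * Real.log m := by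
    intro c m hc hm
    rcases eq_or_lt_of_le hc with h | h
    · have : Real.sqrt m ^ 2 = m := Real.sq_sqrt hm.le
      simp [← h]
      nlinarith [this]
    · set s := Real.sqrt c with hs
      set r := Real.sqrt m with hr
      have hs0 : 0 < s := Real.sqrt_pos.mpr h
      have hr0 : 0 < r := Real.sqrt_pos.mpr hm
      have hcs : s ^ 2 = c := Real.sq_sqrt hc
      have hmr : r ^ 2 = m := Real.sq_sqrt hm.le
      have hlog1 : Real.log (r / s) ≤ r / s - 1 := Real.log_le_sub_one_of_pos (by positivity)
      have hlog2 : Real.log (r / s) = Real.log r - Real.log s :=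
        Real.log_div (ne_of_gt hr0) (ne_of_gt hs0)
      have hls : 1 - r / s ≤ Real.log s - Real.log r := by
        rw [hlog2] at hlog1; linarith
      have hlc : Real.log c = 2 * Real.log s := by
        rw [← hcs, Real.log_pow]; push_cast; ring
      have hlm : Real.log m = 2 * Real.log r := by
        rw [← hmr, Real.log_pow]; push_cast; ring
      have hmul : s * (1 - r / s) ≤ s * (Real.log s - Real.log r) :=
        mul_le_mul_of_nonneg_left hls hs0.le
      have hsub : s * (1 - r / s) = s - r := by field_simp
      rw [hlc, hlm, ← hcs, ← hmr]
      nlinarith [hmul, hsub, sq_nonneg (s - r), hs0.le]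
  rcases eq_or_lt_of_le (by positivity : (0:ℝ) ≤ (a + b) / 2) with h | h
  · have ha0 : a = 0 := by linarith [ha, hb]
    have hb0 : b = 0 := by linarith [ha, hb]
    simp [ha0, hb0]
  · have k1 := key a ((a + b) / 2) ha h
    have k2 := key b ((a + b) / 2) hb h
    nlinarith [sq_nonneg (Real.sqrt a + Real.sqrt b - 2 * Real.sqrt ((a + b)/2)),
      sq_nonneg (Real.sqrt a - Real.sqrt b)]

lemma ent_eq_integral_pi (π μ : Measure (Ed d)) [SigmaFinite μ] [SigmaFinite π] (hac : μ ≪ π) :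
    Ent π μ = ∫ x, rde π μ x * Real.log (rde π μ x) ∂π := by
  exact integral_density π μ hac _

lemma integrable_mul_log (π μ : Measure (Ed d)) [SigmaFinite μ] [SigmaFinite π] (hac : μ ≪ π)
    (hint : Integrable (fun x => Real.log (rde π μ x)) μ) :
    Integrable (fun x => rde π μ x * Real.log (rde π μ x)) π := by
  exact (integrable_density π μ hac).mp hint

lemma ent_nonneg (π μ : Measure (Ed d)) [IsProbabilityMeasure μ] [IsProbabilityMeasure π]
    (hac : μ ≪ π) : 0 ≤ Ent π μ := by
  by_cases h : Integrable (fun x => Real.log (rde π μ x)) μ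
  · rw [ent_eq_integral_pi π μ hac]
    have hint : Integrable (fun x => rde π μ x * Real.log (rde π μ x)) π :=
      integrable_mul_log π μ hac h
    have hint2 : Integrable (fun x => rde π μ x - 1) π :=
      (Measure.integrable_toReal_rnDeriv).sub (integrable_const 1)
    have hmono := integral_mono hint2 hint
      (fun x => sub_one_le_mul_log (rde_nonneg π μ x))
    have : ∫ x, (rde π μ x - 1) ∂π = 0 := by
      have h3 : ∫ x, (rde π μ x - 1) ∂π = (∫ x, rde π μ x ∂π) - ∫ _x, (1:ℝ) ∂π :=
        integral_sub Measure.integrable_toReal_rnDeriv (integrable_const 1)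
      rw [h3, integral_rde π μ hac]
      simp
    linarith
  · simp only [Ent]
    rw [integral_undef h]

/-! ### Basic facts about `W2sq` -/

lemma cost_nonneg (p : Ed d × Ed d) : 0 ≤ cost p := sq_nonneg _

lemma cost_continuous : Continuous (fun p : Ed d × Ed d => cost p) := by
  exact ((continuous_fst.sub continuous_snd).norm).pow 2

lemma cost_le (p : Ed d × Ed d) : cost p ≤ 2 * ‖p.1‖ ^ 2 + 2 * ‖p.2‖ ^ 2 := by
  have h := norm_sub_le p.1 p.2
  have h1 := norm_nonneg p.1
  have h2 := norm_nonneg p.2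
  have h4 : ‖p.1 - p.2‖ ^ 2 ≤ (‖p.1‖ + ‖p.2‖) ^ 2 :=
    pow_le_pow_left₀ (norm_nonneg _) h 2
  have : cost p = ‖p.1 - p.2‖ ^ 2 := rfl
  rw [this]
  nlinarith [sq_nonneg (‖p.1‖ - ‖p.2‖)]

lemma integrable_comp_fst {γ : Measure (Ed d × Ed d)} {μ : Measure (Ed d)}
    (h : γ.map Prod.fst = μ) {g : Ed d → ℝ} (hg : AEStronglyMeasurable g μ)
    (hig : Integrable g μ) : Integrable (fun p : Ed d × Ed d => g p.1) γ := by
  rw [← h] at hig hg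
  exact (integrable_map_measure hg measurable_fst.aemeasurable).mp hig

lemma integrable_comp_snd {γ : Measure (Ed d × Ed d)} {ν : Measure (Ed d)}
    (h : γ.map Prod.snd = ν) {g : Ed d → ℝ} (hg : AEStronglyMeasurable g ν)
    (hig : Integrable g ν) : Integrable (fun p : Ed d × Ed d => g p.2) γ := by
  rw [← h] at hig hg
  exact (integrable_map_measure hg measurable_snd.aemeasurable).mp hig

lemma integrable_cost {γ : Measure (Ed d × Ed d)} {μ ν : Measure (Ed d)}
    (hc : IsCoupling γ μ ν) (hμ : P2 μ) (hν : P2 ν) :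
    Integrable cost γ := by
  have hm1 : AEStronglyMeasurable (fun x : Ed d => ‖x‖ ^ 2) μ :=
    (continuous_norm.pow 2).aestronglyMeasurable
  have hm2 : AEStronglyMeasurable (fun x : Ed d => ‖x‖ ^ 2) ν :=
    (continuous_norm.pow 2).aestronglyMeasurable
  have h1 : Integrable (fun p : Ed d × Ed d => ‖p.1‖ ^ 2) γ :=
    integrable_comp_fst hc.1 hm1 hμ.2
  have h2 : Integrable (fun p : Ed d × Ed d => ‖p.2‖ ^ 2) γ :=
    integrable_comp_snd hc.2 hm2 hν.2
  refine ((h1.const_mul 2).add (h2.const_mul 2)).mono'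
    cost_continuous.aestronglyMeasurable ?_
  filter_upwards with p
  rw [Real.norm_eq_abs, abs_of_nonneg (cost_nonneg p)]
  exact cost_le p

lemma w2sq_nonneg (μ ν : Measure (Ed d)) : 0 ≤ W2sq μ ν := by
  apply Real.sInf_nonneg
  rintro r ⟨γ, hc, hi, rfl⟩
  exact integral_nonneg fun p => sq_nonneg _

lemma w2sq_le {γ : Measure (Ed d × Ed d)} {μ ν : Measure (Ed d)}
    (hc : IsCoupling γ μ ν) (hint : Integrable cost γ) :
    W2sq μ ν ≤ ∫ p, cost p ∂γ := by
  apply csInf_le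
  · refine ⟨0, ?_⟩
    rintro r ⟨γ', hc', hi', rfl⟩
    exact integral_nonneg fun p => sq_nonneg _
  · exact ⟨γ, hc, hint, rfl⟩

lemma isCoupling_prod (μ ν : Measure (Ed d)) [IsProbabilityMeasure μ]
    [IsProbabilityMeasure ν] : IsCoupling (μ.prod ν) μ ν := by
  constructor
  · rw [Measure.map_fst_prod]; simp
  · rw [Measure.map_snd_prod]; simp

lemma exists_coupling {μ ν : Measure (Ed d)} (hμ : P2 μ) (hν : P2 ν) {ε : ℝ}
    (hε : 0 < ε) : ∃ γ : Measure (Ed d × Ed d), IsCoupling γ μ ν ∧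
      Integrable cost γ ∧ ∫ p, cost p ∂γ ≤ W2sq μ ν + ε := by
  haveI := hμ.1
  haveI := hν.1
  have hmem : (∫ p, cost p ∂(μ.prod ν)) ∈ { r : ℝ | ∃ γ : Measure (Ed d × Ed d),
      IsCoupling γ μ ν ∧ Integrable (fun p => ‖p.1 - p.2‖ ^ 2) γ ∧
      r = ∫ p, ‖p.1 - p.2‖ ^ 2 ∂γ } :=
    ⟨μ.prod ν, isCoupling_prod μ ν, integrable_cost (isCoupling_prod μ ν) hμ hν, rfl⟩
  have hlt : W2sq μ ν < W2sq μ ν + ε := lt_add_of_pos_right _ hε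
  obtain ⟨r, ⟨γ, hcγ, hiγ, rfl⟩, hrlt⟩ := exists_lt_of_csInf_lt ⟨_, hmem⟩ hlt
  exact ⟨γ, hcγ, hiγ, hrlt.le⟩

lemma w2sq_self {μ : Measure (Ed d)} (hμ : P2 μ) : W2sq μ μ = 0 := by
  haveI := hμ.1
  have hdiag : Measurable (fun x : Ed d => (x, x)) := measurable_id.prodMk measurable_id
  set γ := μ.map (fun x => (x, x)) with hγ
  have hc : IsCoupling γ μ μ := by
    constructor <;>
    · rw [hγ, Measure.map_map (by measurability) hdiag]
      simp [Function.comp_def]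
  have hcost : ∀ x : Ed d, cost ((fun x : Ed d => (x, x)) x) = 0 := by
    intro x; simp [cost]
  have hint : Integrable cost γ := by
    rw [hγ, integrable_map_measure cost_continuous.aestronglyMeasurable hdiag.aemeasurable]
    refine (integrable_zero _ _ _).congr (Eventually.of_forall fun x => ?_)
    simp [Function.comp_def, cost]
  have hval : ∫ p, cost p ∂γ = 0 := by
    rw [hγ, integral_map hdiag.aemeasurable cost_continuous.aestronglyMeasurable]
    simp [cost]
  refine le_antisymm ?_ (w2sq_nonneg μ μ)
  have := w2sq_le hc hint
  rwa [hval] at this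

lemma W2_self {μ : Measure (Ed d)} (hμ : P2 μ) : W2 μ μ = 0 := by
  simp [W2, w2sq_self hμ]

/-! ### Mixtures -/

lemma mid_prob (μ ν : Measure (Ed d)) [IsProbabilityMeasure μ] [IsProbabilityMeasure ν] :
    IsProbabilityMeasure (mid μ ν) := by
  constructor
  simp only [mid]
  simp [ENNReal.inv_two_add_inv_two]

lemma mid_P2 {μ ν : Measure (Ed d)} (hμ : P2 μ) (hν : P2 ν) : P2 (mid μ ν) := by
  haveI := hμ.1
  haveI := hν.1
  refine ⟨mid_prob μ ν, ?_⟩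
  simp only [mid]
  exact ((integrable_smul_measure (by norm_num) (by norm_num)).mpr hμ.2).add_measure
    ((integrable_smul_measure (by norm_num) (by norm_num)).mpr hν.2)

lemma mid_ac {π μ ν : Measure (Ed d)} (hμ : μ ≪ π) (hν : ν ≪ π) : mid μ ν ≪ π := by
  intro s hs
  simp only [mid]
  simp [hμ hs, hν hs]

lemma integral_mid {μ ν : Measure (Ed d)} {f : Ed d → ℝ} (h1 : Integrable f μ)
    (h2 : Integrable f ν) :
    ∫ x, f x ∂(mid μ ν) = (∫ x, f x ∂μ) / 2 + (∫ x, f x ∂ν) / 2 := by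
  simp only [mid]
  rw [integral_add_measure
    ((integrable_smul_measure (by norm_num) (by norm_num)).mpr h1)
    ((integrable_smul_measure (by norm_num) (by norm_num)).mpr h2),
    integral_smul_measure, integral_smul_measure]
  simp only [smul_eq_mul]
  norm_num
  ring

lemma rde_mid {π μ ν : Measure (Ed d)} [SigmaFinite π] [SigmaFinite μ] [SigmaFinite ν]
    (hμ : μ ≪ π) (hν : ν ≪ π) :
    rde π (mid μ ν) =ᵐ[π] fun x => (rde π μ x + rde π ν x) / 2 := by
  set f : Ed d → ℝ≥0∞ := fun a => 2⁻¹ * μ.rnDeriv π a + 2⁻¹ * ν.rnDeriv π a with hf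
  have hfm : Measurable f :=
    ((Measure.measurable_rnDeriv μ π).const_mul _).add
      ((Measure.measurable_rnDeriv ν π).const_mul _)
  have h1 : π.withDensity f = mid μ ν := by
    have hfe : f = (2⁻¹ : ℝ≥0∞) • μ.rnDeriv π + (2⁻¹ : ℝ≥0∞) • ν.rnDeriv π := by
      funext a
      simp [hf]
    rw [hfe, withDensity_add_left ((Measure.measurable_rnDeriv μ π).const_smul _),
      withDensity_smul _ (Measure.measurable_rnDeriv μ π),
      withDensity_smul _ (Measure.measurable_rnDeriv ν π),
      Measure.withDensity_rnDeriv_eq _ _ hμ, Measure.withDensity_rnDeriv_eq _ _ hν]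
    rfl
  have h2 := Measure.rnDeriv_withDensity π hfm
  rw [h1] at h2
  filter_upwards [h2, μ.rnDeriv_lt_top π, ν.rnDeriv_lt_top π] with x hx h1x h2x
  simp only [rde, hx, hf]
  rw [ENNReal.toReal_add (ENNReal.mul_ne_top (by norm_num) h1x.ne)
    (ENNReal.mul_ne_top (by norm_num) h2x.ne), ENNReal.toReal_mul, ENNReal.toReal_mul]
  simp [ENNReal.toReal_inv]
  ring

lemma w2sq_midpoint {μ1 μ2 μ0 : Measure (Ed d)} (h1 : P2 μ1) (h2 : P2 μ2)
    (h0 : P2 μ0) : W2sq (mid μ1 μ2) μ0 ≤ W2sq μ1 μ0 / 2 + W2sq μ2 μ0 / 2 := by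
  refine le_of_forall_pos_le_add fun ε hε => ?_
  obtain ⟨γ1, hc1, hi1, hle1⟩ := exists_coupling h1 h0 hε
  obtain ⟨γ2, hc2, hi2, hle2⟩ := exists_coupling h2 h0 hε
  set Γ := (2⁻¹ : ℝ≥0∞) • γ1 + (2⁻¹ : ℝ≥0∞) • γ2 with hΓ
  have hcoup : IsCoupling Γ (mid μ1 μ2) μ0 := by
    constructor
    · rw [hΓ, Measure.map_add _ _ measurable_fst, Measure.map_smul, Measure.map_smul,
        hc1.1, hc2.1]
      rfl
    · rw [hΓ, Measure.map_add _ _ measurable_snd, Measure.map_smul, Measure.map_smul,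
        hc1.2, hc2.2, ← add_smul, ENNReal.inv_two_add_inv_two, one_smul]
  have hint : Integrable cost Γ := by
    rw [hΓ]
    exact ((integrable_smul_measure (by norm_num) (by norm_num)).mpr hi1).add_measure
      ((integrable_smul_measure (by norm_num) (by norm_num)).mpr hi2)
  have hval : ∫ p, cost p ∂Γ = (∫ p, cost p ∂γ1) / 2 + (∫ p, cost p ∂γ2) / 2 := by
    rw [hΓ, integral_add_measure
      ((integrable_smul_measure (by norm_num) (by norm_num)).mpr hi1)
      ((integrable_smul_measure (by norm_num) (by norm_num)).mpr hi2),
      integral_smul_measure, integral_smul_measure]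
    simp only [smul_eq_mul]
    norm_num
    ring
  have := w2sq_le hcoup hint
  rw [hval] at this
  linarith

/-! ### The flat derivative -/

lemma DF_cont {DF : Measure (Ed d) → Ed d → ℝ} {L_F : ℝ}
    (hlip : FlatLip DF L_F) {μ : Measure (Ed d)} (hμ : P2 μ) : Continuous (DF μ) := by
  have key : ∀ x y : Ed d, |DF μ y - DF μ x| ≤ max L_F 0 * ‖y - x‖ := by
    intro x y
    have h := hlip μ μ x y hμ hμ
    rw [W2_self hμ, add_zero] at h
    calc |DF μ y - DF μ x| ≤ L_F * ‖y - x‖ := h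
      _ ≤ max L_F 0 * ‖y - x‖ :=
        mul_le_mul_of_nonneg_right (le_max_left _ _) (norm_nonneg _)
  have hlw : LipschitzWith (Real.toNNReal (max L_F 0)) (DF μ) := by
    apply LipschitzWith.of_dist_le_mul
    intro x y
    rw [Real.dist_eq, dist_eq_norm]
    calc |DF μ x - DF μ y| ≤ max L_F 0 * ‖x - y‖ := key y x
      _ = Real.toNNReal (max L_F 0) * ‖x - y‖ := by
        rw [Real.coe_toNNReal _ (le_max_right _ _)]
  exact hlw.continuous

lemma DF_integrable {DF : Measure (Ed d) → Ed d → ℝ} {L_F C_F : ℝ}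
    (hlip : FlatLip DF L_F) (hbdd : FlatBdd DF C_F) {μ ν : Measure (Ed d)}
    (hμ : P2 μ) (hν : P2 ν) : Integrable (DF μ) ν := by
  haveI := hν.1
  refine (integrable_const C_F).mono'
    ((DF_cont hlip hμ).aestronglyMeasurable) ?_
  filter_upwards with x
  rw [Real.norm_eq_abs]
  exact hbdd μ x hμ

lemma F_mid {F : Measure (Ed d) → ℝ} {DF : Measure (Ed d) → Ed d → ℝ} {L_F C_F : ℝ}
    (hflat : IsFlatDeriv F DF) (hconv : FlatConvex F DF) (hlip : FlatLip DF L_F)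
    (hbdd : FlatBdd DF C_F) {μ1 μ2 : Measure (Ed d)} (h1 : P2 μ1) (h2 : P2 μ2) :
    F (mid μ1 μ2) ≤ F μ1 / 2 + F μ2 / 2 := by
  have hm : P2 (mid μ1 μ2) := mid_P2 h1 h2
  have hint1 : Integrable (DF (mid μ1 μ2)) μ1 := DF_integrable hlip hbdd hm h1
  have hint2 : Integrable (DF (mid μ1 μ2)) μ2 := DF_integrable hlip hbdd hm h2
  have hc1 := hconv (mid μ1 μ2) μ1 hm h1
  have hc2 := hconv (mid μ1 μ2) μ2 hm h2
  have hz := hflat.centered (mid μ1 μ2) hm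
  have hmix := integral_mid (μ := μ1) (ν := μ2) hint1 hint2
  rw [hz] at hc1 hc2
  rw [hz] at hmix
  linarith

lemma F_compare {F : Measure (Ed d) → ℝ} {DF : Measure (Ed d) → Ed d → ℝ} {L_F C_F : ℝ}
    (hflat : IsFlatDeriv F DF) (hconv : FlatConvex F DF) (hlip : FlatLip DF L_F)
    (hbdd : FlatBdd DF C_F) {π μ ν : Measure (Ed d)} [SigmaFinite π]
    (hμ : P2 μ) (hν : P2 ν) (hacμ : μ ≪ π) (hacν : ν ≪ π) :
    F ν ≤ F μ + |C_F| * ∫ x, |rde π μ x - rde π ν x| ∂π := by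
  haveI := hμ.1
  haveI := hν.1
  have hc := hconv ν μ hν hμ
  have hz := hflat.centered ν hν
  have hDFμ : Integrable (DF ν) μ := DF_integrable hlip hbdd hν hμ
  have hDFν : Integrable (DF ν) ν := DF_integrable hlip hbdd hν hν
  have hμd : ∫ x, DF ν x ∂μ = ∫ x, rde π μ x * DF ν x ∂π := integral_density π μ hacμ _
  have hνd : ∫ x, DF ν x ∂ν = ∫ x, rde π ν x * DF ν x ∂π := integral_density π ν hacν _
  have hiμ : Integrable (fun x => rde π μ x * DF ν x) π :=
    (integrable_density π μ hacμ).mp hDFμ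
  have hiν : Integrable (fun x => rde π ν x * DF ν x) π :=
    (integrable_density π ν hacν).mp hDFν
  have habs : Integrable (fun x => |rde π μ x - rde π ν x| * |C_F|) π :=
    ((Measure.integrable_toReal_rnDeriv.sub Measure.integrable_toReal_rnDeriv).abs).mul_const _
  have key : ∫ x, (rde π ν x - rde π μ x) * DF ν x ∂π
      ≤ ∫ x, |rde π μ x - rde π ν x| * |C_F| ∂π := by
    refine integral_mono (hiν.sub hiμ |>.congr ?_) habs ?_
    · filter_upwards with x
      simp only [Pi.sub_apply]
      ring
    · intro x
      calc (rde π ν x - rde π μ x) * DF ν x ≤ |(rde π ν x - rde π μ x) * DF ν x| :=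
          le_abs_self _
        _ = |rde π ν x - rde π μ x| * |DF ν x| := abs_mul _ _
        _ ≤ |rde π ν x - rde π μ x| * |C_F| := by
          refine mul_le_mul_of_nonneg_left ?_ (abs_nonneg _)
          exact le_trans (hbdd ν x hν) (le_abs_self _)
        _ = |rde π μ x - rde π ν x| * |C_F| := by rw [abs_sub_comm]
  have hsplit : ∫ x, (rde π ν x - rde π μ x) * DF ν x ∂π
      = (∫ x, rde π ν x * DF ν x ∂π) - ∫ x, rde π μ x * DF ν x ∂π := by
    rw [← integral_sub hiν hiμ]
    refine integral_congr_ae (Eventually.of_forall fun x => ?_)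
    ring
  have hCmul : ∫ x, |rde π μ x - rde π ν x| * |C_F| ∂π
      = |C_F| * ∫ x, |rde π μ x - rde π ν x| ∂π := by
    rw [← integral_const_mul]
    refine integral_congr_ae (Eventually.of_forall fun x => ?_)
    ring
  rw [hsplit, ← hνd, ← hμd, hz] at key
  rw [hCmul] at key
  linarith

/-! ### Hellinger facts -/

lemma hsq_integrand_integrable {π μ ν : Measure (Ed d)} [IsFiniteMeasure μ]
    [IsFiniteMeasure ν] :
    Integrable (fun x => (Real.sqrt (rde π μ x) - Real.sqrt (rde π ν x)) ^ 2) π := by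
  have hmeas : AEStronglyMeasurable
      (fun x => (Real.sqrt (rde π μ x) - Real.sqrt (rde π ν x)) ^ 2) π :=
    (((measurable_rde π μ).sqrt.sub (measurable_rde π ν).sqrt).pow_const 2).aestronglyMeasurable
  refine (((Measure.integrable_toReal_rnDeriv (μ := μ) (ν := π)).const_mul 2).add
    ((Measure.integrable_toReal_rnDeriv (μ := ν) (ν := π)).const_mul 2)).mono' hmeas ?_
  filter_upwards with x
  rw [Real.norm_eq_abs, abs_of_nonneg (sq_nonneg _)]
  have h1 : Real.sqrt (rde π μ x) ^ 2 = rde π μ x := Real.sq_sqrt (rde_nonneg π μ x)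
  have h2 : Real.sqrt (rde π ν x) ^ 2 = rde π ν x := Real.sq_sqrt (rde_nonneg π ν x)
  have h3 : ((fun x => 2 * (μ.rnDeriv π x).toReal) + fun x => 2 * (ν.rnDeriv π x).toReal) x
      = 2 * rde π μ x + 2 * rde π ν x := rfl
  rw [h3]
  nlinarith [sq_nonneg (Real.sqrt (rde π μ x) + Real.sqrt (rde π ν x))]

lemma hsq_nonneg (π μ ν : Measure (Ed d)) : 0 ≤ Hsq π μ ν := by
  exact integral_nonneg fun x => sq_nonneg _

lemma eq_of_hsq_zero {π μ ν : Measure (Ed d)} [IsFiniteMeasure μ] [IsFiniteMeasure ν]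
    [SigmaFinite π] (hacμ : μ ≪ π) (hacν : ν ≪ π) (hH : Hsq π μ ν = 0) : μ = ν := by
  have hi := hsq_integrand_integrable (π := π) (μ := μ) (ν := ν)
  have h0 := (integral_eq_zero_iff_of_nonneg (fun x => sq_nonneg _) hi).mp hH
  have heq : μ.rnDeriv π =ᵐ[π] ν.rnDeriv π := by
    filter_upwards [h0, μ.rnDeriv_lt_top π, ν.rnDeriv_lt_top π] with x hx h1 h2
    have hsq : (Real.sqrt (rde π μ x) - Real.sqrt (rde π ν x)) ^ 2 = 0 := hx
    have hs : Real.sqrt (rde π μ x) = Real.sqrt (rde π ν x) := by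
      nlinarith [hsq]
    have hr : rde π μ x = rde π ν x := by
      have e1 := Real.sq_sqrt (rde_nonneg π μ x)
      have e2 := Real.sq_sqrt (rde_nonneg π ν x)
      rw [← e1, ← e2, hs]
    exact (ENNReal.toReal_eq_toReal_iff' h1.ne h2.ne).mp hr
  calc μ = π.withDensity (μ.rnDeriv π) := (Measure.withDensity_rnDeriv_eq _ _ hacμ).symm
    _ = π.withDensity (ν.rnDeriv π) := withDensity_congr_ae heq
    _ = ν := Measure.withDensity_rnDeriv_eq _ _ hacν

/-! ### The key convexity gap -/

theorem key_gap {F : Measure (Ed d) → ℝ} {DF : Measure (Ed d) → Ed d → ℝ}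
    {π μ0 : Measure (Ed d)} {L_F C_F σ τ : ℝ}
    (hσ : 0 < σ) (hτ : 0 < τ) (hπ : P2 π) (h0 : P2 μ0)
    (hflat : IsFlatDeriv F DF) (hconv : FlatConvex F DF) (hlip : FlatLip DF L_F)
    (hbdd : FlatBdd DF C_F) {μ1 μ2 : Measure (Ed d)} (h1 : Gd π μ1) (h2 : Gd π μ2) :
    Gd π (mid μ1 μ2) ∧
      F (mid μ1 μ2) + σ * Ent π (mid μ1 μ2) + W2sq (mid μ1 μ2) μ0 / (2 * τ)
          + σ / 4 * Hsq π μ1 μ2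
        ≤ (F μ1 + σ * Ent π μ1 + W2sq μ1 μ0 / (2 * τ)) / 2
          + (F μ2 + σ * Ent π μ2 + W2sq μ2 μ0 / (2 * τ)) / 2 := by
  obtain ⟨h1P2, h1ac, h1int⟩ := h1
  obtain ⟨h2P2, h2ac, h2int⟩ := h2
  haveI := h1P2.1
  haveI := h2P2.1
  haveI := hπ.1
  have hmP2 : P2 (mid μ1 μ2) := mid_P2 h1P2 h2P2
  have hmac : mid μ1 μ2 ≪ π := mid_ac h1ac h2ac
  haveI := hmP2.1
  have hd := rde_mid (π := π) h1ac h2ac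
  have hφ1 : Integrable (fun x => rde π μ1 x * Real.log (rde π μ1 x)) π :=
    integrable_mul_log π μ1 h1ac h1int
  have hφ2 : Integrable (fun x => rde π μ2 x * Real.log (rde π μ2 x)) π :=
    integrable_mul_log π μ2 h2ac h2int
  -- integrability of the midpoint entropy integrand
  have hr1 : Integrable (fun x => rde π μ1 x) π := Measure.integrable_toReal_rnDeriv
  have hr2 : Integrable (fun x => rde π μ2 x) π := Measure.integrable_toReal_rnDeriv
  have hmidmeas : Measurable (fun x =>
      ((rde π μ1 x + rde π μ2 x) / 2) * Real.log ((rde π μ1 x + rde π μ2 x) / 2)) := by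
    have : Measurable (fun x => (rde π μ1 x + rde π μ2 x) / 2) :=
      ((measurable_rde π μ1).add (measurable_rde π μ2)).div_const 2
    exact Real.continuous_mul_log.measurable.comp this
  have hptconv : ∀ x : Ed d,
      (Real.sqrt (rde π μ1 x) - Real.sqrt (rde π μ2 x)) ^ 2 / 4
        + ((rde π μ1 x + rde π μ2 x) / 2) * Real.log ((rde π μ1 x + rde π μ2 x) / 2)
      ≤ rde π μ1 x * Real.log (rde π μ1 x) / 2 + rde π μ2 x * Real.log (rde π μ2 x) / 2 :=
    fun x => entropy_gap (rde_nonneg π μ1 x) (rde_nonneg π μ2 x)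
  have hmidint : Integrable (fun x =>
      ((rde π μ1 x + rde π μ2 x) / 2) * Real.log ((rde π μ1 x + rde π μ2 x) / 2)) π := by
    refine Integrable.mono' (g := fun x => rde π μ1 x * Real.log (rde π μ1 x) / 2
        + rde π μ2 x * Real.log (rde π μ2 x) / 2 + 2)
      (((hφ1.div_const 2).add (hφ2.div_const 2)).add (integrable_const 2))
      hmidmeas.aestronglyMeasurable ?_
    filter_upwards with x
    have hub := hptconv x
    have hsq := sq_nonneg (Real.sqrt (rde π μ1 x) - Real.sqrt (rde π μ2 x))
    have hlb : (rde π μ1 x + rde π μ2 x) / 2 - 1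
        ≤ ((rde π μ1 x + rde π μ2 x) / 2) * Real.log ((rde π μ1 x + rde π μ2 x) / 2) :=
      sub_one_le_mul_log (by
        have := rde_nonneg π μ1 x
        have := rde_nonneg π μ2 x
        linarith)
    have hρ1 : rde π μ1 x - 1 ≤ rde π μ1 x * Real.log (rde π μ1 x) :=
      sub_one_le_mul_log (rde_nonneg π μ1 x)
    have hρ2 : rde π μ2 x - 1 ≤ rde π μ2 x * Real.log (rde π μ2 x) :=
      sub_one_le_mul_log (rde_nonneg π μ2 x)
    have hρ1n := rde_nonneg π μ1 x
    have hρ2n := rde_nonneg π μ2 x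
    rw [Real.norm_eq_abs, abs_le]
    constructor <;> nlinarith
  -- the midpoint is in the good set
  have hmidint' : Integrable (fun x => rde π (mid μ1 μ2) x
      * Real.log (rde π (mid μ1 μ2) x)) π := by
    refine hmidint.congr ?_
    filter_upwards [hd] with x hx
    rw [hx]
  have hGm : Gd π (mid μ1 μ2) :=
    ⟨hmP2, hmac, (integrable_density π (mid μ1 μ2) hmac).mpr hmidint'⟩
  refine ⟨hGm, ?_⟩
  -- entropy inequality
  have hEm : Ent π (mid μ1 μ2) = ∫ x,
      ((rde π μ1 x + rde π μ2 x) / 2) * Real.log ((rde π μ1 x + rde π μ2 x) / 2) ∂π := by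
    rw [ent_eq_integral_pi π (mid μ1 μ2) hmac]
    refine integral_congr_ae ?_
    filter_upwards [hd] with x hx
    rw [hx]
  have hsqint := hsq_integrand_integrable (π := π) (μ := μ1) (ν := μ2)
  have hgap : Ent π (mid μ1 μ2) + Hsq π μ1 μ2 / 4 ≤ Ent π μ1 / 2 + Ent π μ2 / 2 := by
    have hmono := integral_mono ((hsqint.div_const 4).add hmidint)
      ((hφ1.div_const 2).add (hφ2.div_const 2)) hptconv
    simp only [Pi.add_apply] at hmono
    rw [integral_add (hsqint.div_const 4) hmidint,
      integral_add (hφ1.div_const 2) (hφ2.div_const 2),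
      integral_div, integral_div, integral_div] at hmono
    rw [hEm, ent_eq_integral_pi π μ1 h1ac, ent_eq_integral_pi π μ2 h2ac, Hsq]
    linarith
  -- F inequality
  have hF := F_mid hflat hconv hlip hbdd h1P2 h2P2
  -- W2sq inequality
  have hW := w2sq_midpoint h1P2 h2P2 h0
  have hτ2 : (0:ℝ) < 2 * τ := by linarith
  have hWd : W2sq (mid μ1 μ2) μ0 / (2 * τ)
      ≤ (W2sq μ1 μ0 / 2 + W2sq μ2 μ0 / 2) / (2 * τ) :=
    (div_le_div_iff_of_pos_right hτ2).mpr hW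
  have hgapσ := mul_le_mul_of_nonneg_left hgap hσ.le
  rw [mul_add] at hgapσ
  have expand : σ * (Hsq π μ1 μ2 / 4) = σ / 4 * Hsq π μ1 μ2 := by ring
  rw [expand] at hgapσ
  have hsplit2 : (W2sq μ1 μ0 / 2 + W2sq μ2 μ0 / 2) / (2 * τ)
      = W2sq μ1 μ0 / (2 * τ) / 2 + W2sq μ2 μ0 / (2 * τ) / 2 := by ring
  rw [hsplit2] at hWd
  linarith

/-! ### Lower semicontinuity surgery for `W2sq` -/

theorem w2sq_surgery {π μ0 μ ν : Measure (Ed d)} [IsProbabilityMeasure π]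
    [IsProbabilityMeasure μ] [IsProbabilityMeasure ν]
    (h0 : P2 μ0) (hμ : P2 μ) (hν : P2 ν) (hacμ : μ ≪ π) (hacν : ν ≪ π)
    {R ε δ : ℝ} (hR : 0 ≤ R) (hε : 0 < ε) (hδ : 0 ≤ δ)
    (hmass : ∫⁻ x, (ν.rnDeriv π x - μ.rnDeriv π x) ∂π ≤ ENNReal.ofReal ε)
    (hmom : ∫⁻ x, ENNReal.ofReal (‖x‖ ^ 2) * (ν.rnDeriv π x - μ.rnDeriv π x) ∂π
      ≤ ENNReal.ofReal ε)
    (htail : ∫⁻ y in {y : Ed d | R < ‖y‖}, ENNReal.ofReal (‖y‖ ^ 2) ∂μ0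
      ≤ ENNReal.ofReal δ) :
    W2sq ν μ0 ≤ W2sq μ μ0 + 3 * ε + 2 * (R ^ 2 * ε) + 2 * δ := by
  have hmμ : Measurable (μ.rnDeriv π) := Measure.measurable_rnDeriv μ π
  have hmν : Measurable (ν.rnDeriv π) := Measure.measurable_rnDeriv ν π
  set dl : Ed d → ℝ≥0∞ := fun x => min (μ.rnDeriv π x) (ν.rnDeriv π x) with hdl
  set xi : Ed d → ℝ≥0∞ := fun x => ν.rnDeriv π x - μ.rnDeriv π x with hxi
  have hmdl : Measurable dl := hmμ.min hmν
  have hmxi : Measurable xi := hmν.sub hmμ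
  have hsplit : ∀ x, dl x + xi x = ν.rnDeriv π x := by
    intro x
    rcases le_total (μ.rnDeriv π x) (ν.rnDeriv π x) with h | h
    · simp only [hdl, hxi, min_eq_left h]
      exact add_tsub_cancel_of_le h
    · simp only [hdl, hxi, min_eq_right h, tsub_eq_zero_of_le h, add_zero]
  obtain ⟨γ, hγc, hγi, hγcost⟩ := exists_coupling hμ h0 hε
  haveI := h0.1
  haveI : IsProbabilityMeasure γ := by
    constructor
    have h1 : γ.map Prod.fst Set.univ = 1 := by
      rw [hγc.1]
      exact measure_univ
    rwa [Measure.map_apply measurable_fst MeasurableSet.univ, Set.preimage_univ] at h1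
  set w : Ed d → ℝ≥0∞ := fun x => dl x / μ.rnDeriv π x with hw
  have hmw : Measurable w := hmdl.div hmμ
  have hw1 : ∀ x, w x ≤ 1 := fun x =>
    ENNReal.div_le_of_le_mul (by rw [one_mul]; exact min_le_left _ _)
  have hwμ : ∀ᵐ x ∂π, (μ.rnDeriv π * w) x = dl x := by
    filter_upwards [μ.rnDeriv_lt_top π] with x hx
    rcases eq_or_ne (μ.rnDeriv π x) 0 with h0' | h0'
    · have hdl0 : dl x = 0 := le_antisymm (h0' ▸ min_le_left _ _) zero_le
      simp [hw, h0', hdl0]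
    · exact ENNReal.mul_div_cancel h0' hx.ne
  set γ' : Measure (Ed d × Ed d) := γ.withDensity (fun p => w p.1) with hγ'
  have hγ'le : γ' ≤ γ := by
    rw [Measure.le_iff]
    intro s hs
    rw [hγ', withDensity_apply _ hs]
    calc ∫⁻ p in s, w p.1 ∂γ ≤ ∫⁻ _p in s, 1 ∂γ :=
        setLIntegral_mono measurable_const (fun p _ => hw1 p.1)
      _ = γ s := by rw [setLIntegral_const, one_mul]
  haveI : IsFiniteMeasure γ' := isFiniteMeasure_of_le γ hγ'le
  set θ : Measure (Ed d) := π.withDensity dl with hθ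
  have hfstγ' : γ'.map Prod.fst = θ := by
    have h1 : γ'.map Prod.fst = μ.withDensity w := by
      ext s hs
      rw [Measure.map_apply measurable_fst hs, hγ',
        withDensity_apply _ (measurable_fst hs), withDensity_apply _ hs, ← hγc.1,
        setLIntegral_map hs hmw measurable_fst]
    rw [h1, ← @Measure.withDensity_rnDeriv_eq _ _ μ π (Measure.haveLebesgueDecomposition_of_sigmaFinite μ π) hacμ, ← withDensity_mul _ hmμ hmw, hθ]
    exact withDensity_congr_ae hwμ
  set νs : Measure (Ed d) := γ'.map Prod.snd with hνs
  have hνsle : νs ≤ μ0 := by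
    rw [hνs, ← hγc.2]
    exact Measure.map_mono hγ'le measurable_snd
  haveI : IsFiniteMeasure νs := isFiniteMeasure_of_le μ0 hνsle
  set am : Measure (Ed d) := π.withDensity xi with ham
  set bm : Measure (Ed d) := μ0 - νs with hbm
  have hbmle : bm ≤ μ0 := hbm ▸ Measure.sub_le
  haveI : IsFiniteMeasure bm := isFiniteMeasure_of_le μ0 hbmle
  set e : ℝ≥0∞ := ∫⁻ x, xi x ∂π with he
  have hee : e ≤ ENNReal.ofReal ε := hmass
  have hent : e ≠ ⊤ := (lt_of_le_of_lt hee ENNReal.ofReal_lt_top).ne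
  have hamuniv : am Set.univ = e := by
    rw [ham, withDensity_apply _ MeasurableSet.univ, setLIntegral_univ]
  haveI : IsFiniteMeasure am := by
    constructor
    rw [hamuniv]
    exact lt_of_le_of_lt hee ENNReal.ofReal_lt_top
  have hνdec : θ + am = ν := by
    have h1 : π.withDensity (dl + xi) = θ + am := withDensity_add_left hmdl xi
    have h2 : dl + xi = ν.rnDeriv π := funext hsplit
    rw [← h1, h2, @Measure.withDensity_rnDeriv_eq _ _ ν π (Measure.haveLebesgueDecomposition_of_sigmaFinite ν π) hacν]
  have hθe : θ Set.univ + e = 1 := by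
    have h3 : θ Set.univ + am Set.univ = ν Set.univ := by
      rw [← Measure.add_apply, hνdec]
    rw [hamuniv, (measure_univ : ν Set.univ = 1)] at h3
    exact h3
  have hθfin : θ Set.univ ≠ ⊤ := by
    have : θ Set.univ ≤ 1 := le_trans le_self_add hθe.le
    exact (lt_of_le_of_lt this ENNReal.one_lt_top).ne
  have hνsuniv : νs Set.univ = θ Set.univ := by
    rw [hνs, Measure.map_apply measurable_snd MeasurableSet.univ, ← hfstγ',
      Measure.map_apply measurable_fst MeasurableSet.univ, Set.preimage_univ,
      Set.preimage_univ]
  have hbmuniv : bm Set.univ = e := by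
    have h4 : e = 1 - θ Set.univ :=
      ENNReal.eq_sub_of_add_eq hθfin (by rw [add_comm]; exact hθe)
    rw [hbm, Measure.sub_apply MeasurableSet.univ hνsle, hνsuniv,
      (measure_univ : μ0 Set.univ = 1), h4]
  set Γ : Measure (Ed d × Ed d) := γ' + e⁻¹ • (am.prod bm) with hΓ
  have hsmulα : e⁻¹ • (bm Set.univ • am) = am := by
    by_cases he0 : e = 0
    · have : am = 0 := Measure.measure_univ_eq_zero.mp (by rw [hamuniv, he0])
      simp [this]
    · rw [hbmuniv, smul_smul, ENNReal.inv_mul_cancel he0 hent, one_smul]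
  have hsmulβ : e⁻¹ • (am Set.univ • bm) = bm := by
    by_cases he0 : e = 0
    · have : bm = 0 := Measure.measure_univ_eq_zero.mp (by rw [hbmuniv, he0])
      simp [this]
    · rw [hamuniv, smul_smul, ENNReal.inv_mul_cancel he0 hent, one_smul]
  have hΓc : IsCoupling Γ ν μ0 := by
    constructor
    · rw [hΓ, Measure.map_add _ _ measurable_fst, Measure.map_smul,
        Measure.map_fst_prod, hfstγ', hsmulα, hνdec]
    · rw [hΓ, Measure.map_add _ _ measurable_snd, Measure.map_smul,
        Measure.map_snd_prod, ← hνs, hsmulβ, hbm, add_comm,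
        Measure.sub_add_cancel_of_le hνsle]
  set C : Ed d × Ed d → ℝ≥0∞ := fun p => ENNReal.ofReal (cost p) with hC
  have hmC : Measurable C := cost_continuous.measurable.ennreal_ofReal
  have hLsplit : ∫⁻ p, C p ∂Γ = ∫⁻ p, C p ∂γ' + e⁻¹ * ∫⁻ p, C p ∂(am.prod bm) := by
    rw [hΓ, lintegral_add_measure, lintegral_smul_measure, smul_eq_mul]
  have hLγ' : ∫⁻ p, C p ∂γ' ≤ ENNReal.ofReal (W2sq μ μ0 + ε) := by
    calc ∫⁻ p, C p ∂γ' ≤ ∫⁻ p, C p ∂γ := lintegral_mono' hγ'le le_rfl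
      _ = ENNReal.ofReal (∫ p, cost p ∂γ) :=
        (ofReal_integral_eq_lintegral_ofReal hγi
          (Eventually.of_forall cost_nonneg)).symm
      _ ≤ ENNReal.ofReal (W2sq μ μ0 + ε) := ENNReal.ofReal_le_ofReal hγcost
  set A : ℝ≥0∞ := ∫⁻ x, ENNReal.ofReal (‖x‖ ^ 2) ∂am with hA
  set B : ℝ≥0∞ := ∫⁻ y, ENNReal.ofReal (‖y‖ ^ 2) ∂bm with hB
  have hmn : Measurable (fun x : Ed d => ENNReal.ofReal (‖x‖ ^ 2)) :=
    (continuous_norm.pow 2).measurable.ennreal_ofReal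
  have hprod1 : ∫⁻ p : Ed d × Ed d, ENNReal.ofReal (‖p.1‖ ^ 2) ∂(am.prod bm)
      = bm Set.univ * A := by
    rw [← lintegral_map hmn measurable_fst, Measure.map_fst_prod, lintegral_smul_measure, smul_eq_mul]
  have hprod2 : ∫⁻ p : Ed d × Ed d, ENNReal.ofReal (‖p.2‖ ^ 2) ∂(am.prod bm)
      = am Set.univ * B := by
    rw [← lintegral_map hmn measurable_snd, Measure.map_snd_prod, lintegral_smul_measure, smul_eq_mul]
  have hCptle : ∀ p : Ed d × Ed d,
      C p ≤ 2 * ENNReal.ofReal (‖p.1‖ ^ 2) + 2 * ENNReal.ofReal (‖p.2‖ ^ 2) := by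
    intro p
    calc C p ≤ ENNReal.ofReal (2 * ‖p.1‖ ^ 2 + 2 * ‖p.2‖ ^ 2) :=
        ENNReal.ofReal_le_ofReal (cost_le p)
      _ = 2 * ENNReal.ofReal (‖p.1‖ ^ 2) + 2 * ENNReal.ofReal (‖p.2‖ ^ 2) := by
        rw [ENNReal.ofReal_add (by positivity) (by positivity),
          ENNReal.ofReal_mul (by norm_num : (0:ℝ) ≤ 2),
          ENNReal.ofReal_mul (by norm_num : (0:ℝ) ≤ 2), ENNReal.ofReal_ofNat]
  have hLprod : ∫⁻ p, C p ∂(am.prod bm) ≤ 2 * (e * A) + 2 * (e * B) := by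
    calc ∫⁻ p, C p ∂(am.prod bm)
        ≤ ∫⁻ p : Ed d × Ed d, (2 * ENNReal.ofReal (‖p.1‖ ^ 2)
            + 2 * ENNReal.ofReal (‖p.2‖ ^ 2)) ∂(am.prod bm) := lintegral_mono hCptle
      _ = 2 * (bm Set.univ * A) + 2 * (am Set.univ * B) := by
        have hma : Measurable (fun p : Ed d × Ed d => ENNReal.ofReal (‖p.1‖ ^ 2)) :=
          hmn.comp measurable_fst
        have hmb : Measurable (fun p : Ed d × Ed d => ENNReal.ofReal (‖p.2‖ ^ 2)) :=
          hmn.comp measurable_snd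
        have hma2 : Measurable (fun p : Ed d × Ed d => 2 * ENNReal.ofReal (‖p.1‖ ^ 2)) :=
          hma.const_mul 2
        rw [lintegral_add_left hma2, lintegral_const_mul 2 hma,
          lintegral_const_mul 2 hmb, hprod1, hprod2]
      _ = 2 * (e * A) + 2 * (e * B) := by rw [hbmuniv, hamuniv]
  have hinvLprod : e⁻¹ * ∫⁻ p, C p ∂(am.prod bm) ≤ 2 * A + 2 * B := by
    by_cases he0 : e = 0
    · have ham0 : am = 0 := Measure.measure_univ_eq_zero.mp (by rw [hamuniv, he0])
      rw [ham0, Measure.zero_prod]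
      simp
    · calc e⁻¹ * ∫⁻ p, C p ∂(am.prod bm) ≤ e⁻¹ * (2 * (e * A) + 2 * (e * B)) :=
          mul_le_mul_right hLprod _
        _ = (e⁻¹ * e) * (2 * A + 2 * B) := by ring
        _ = 2 * A + 2 * B := by rw [ENNReal.inv_mul_cancel he0 hent, one_mul]
  have hAle : A ≤ ENNReal.ofReal ε := by
    rw [hA, ham, lintegral_withDensity_eq_lintegral_mul _ hmxi hmn]
    refine le_trans (le_of_eq (lintegral_congr fun x => ?_)) hmom
    simp [mul_comm, hxi]
  have hsR : MeasurableSet {y : Ed d | R < ‖y‖} :=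
    measurableSet_lt measurable_const measurable_norm
  have hBle : B ≤ ENNReal.ofReal (R ^ 2 * ε) + ENNReal.ofReal δ := by
    rw [hB, ← lintegral_add_compl (fun y => ENNReal.ofReal (‖y‖ ^ 2)) hsR]
    have htailB : ∫⁻ y in {y : Ed d | R < ‖y‖}, ENNReal.ofReal (‖y‖ ^ 2) ∂bm
        ≤ ENNReal.ofReal δ :=
      le_trans (lintegral_mono' (Measure.restrict_mono Set.Subset.rfl hbmle) le_rfl) htail
    have hball : ∫⁻ y in {y : Ed d | R < ‖y‖}ᶜ, ENNReal.ofReal (‖y‖ ^ 2) ∂bm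
        ≤ ENNReal.ofReal (R ^ 2 * ε) := by
      calc ∫⁻ y in {y : Ed d | R < ‖y‖}ᶜ, ENNReal.ofReal (‖y‖ ^ 2) ∂bm
          ≤ ∫⁻ _y in {y : Ed d | R < ‖y‖}ᶜ, ENNReal.ofReal (R ^ 2) ∂bm := by
            refine setLIntegral_mono measurable_const fun y hy => ?_
            refine ENNReal.ofReal_le_ofReal ?_
            have hyR : ‖y‖ ≤ R := le_of_not_gt hy
            nlinarith [norm_nonneg y]
        _ = ENNReal.ofReal (R ^ 2) * bm {y : Ed d | R < ‖y‖}ᶜ := setLIntegral_const _ _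
        _ ≤ ENNReal.ofReal (R ^ 2) * e := by
            refine mul_le_mul_right ?_ _
            rw [← hbmuniv]
            exact measure_mono (Set.subset_univ _)
        _ ≤ ENNReal.ofReal (R ^ 2) * ENNReal.ofReal ε := mul_le_mul_right hee _
        _ = ENNReal.ofReal (R ^ 2 * ε) := (ENNReal.ofReal_mul (by positivity)).symm
    calc ∫⁻ y in {y : Ed d | R < ‖y‖}, ENNReal.ofReal (‖y‖ ^ 2) ∂bm
          + ∫⁻ y in {y : Ed d | R < ‖y‖}ᶜ, ENNReal.ofReal (‖y‖ ^ 2) ∂bm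
        ≤ ENNReal.ofReal δ + ENNReal.ofReal (R ^ 2 * ε) := add_le_add htailB hball
      _ = ENNReal.ofReal (R ^ 2 * ε) + ENNReal.ofReal δ := add_comm _ _
  have hW0 := w2sq_nonneg μ μ0
  set T : ℝ≥0∞ :=
    ENNReal.ofReal ((W2sq μ μ0 + ε) + (2 * ε + 2 * (R ^ 2 * ε + δ))) with hT
  have e1 : ENNReal.ofReal ((W2sq μ μ0 + ε) + (2 * ε + 2 * (R ^ 2 * ε + δ)))
      = ENNReal.ofReal (W2sq μ μ0 + ε) + ENNReal.ofReal (2 * ε + 2 * (R ^ 2 * ε + δ)) :=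
    ENNReal.ofReal_add (by linarith) (by positivity)
  have e2 : ENNReal.ofReal (2 * ε + 2 * (R ^ 2 * ε + δ))
      = ENNReal.ofReal (2 * ε) + ENNReal.ofReal (2 * (R ^ 2 * ε + δ)) :=
    ENNReal.ofReal_add (by positivity) (by positivity)
  have hsum1 : ENNReal.ofReal (2 * ε) = 2 * ENNReal.ofReal ε := by
    rw [ENNReal.ofReal_mul (by norm_num : (0:ℝ) ≤ 2), ENNReal.ofReal_ofNat]
  have hsum2 : ENNReal.ofReal (2 * (R ^ 2 * ε + δ))
      = 2 * (ENNReal.ofReal (R ^ 2 * ε) + ENNReal.ofReal δ) := by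
    rw [ENNReal.ofReal_mul (by norm_num : (0:ℝ) ≤ 2), ENNReal.ofReal_ofNat,
      ENNReal.ofReal_add (by positivity) hδ]
  have hLΓ : ∫⁻ p, C p ∂Γ ≤ T := by
    rw [hT, e1, e2, hsum1, hsum2, hLsplit]
    exact add_le_add hLγ' (le_trans hinvLprod
      (add_le_add (mul_le_mul_right hAle 2) (mul_le_mul_right hBle 2)))
  have hTne : T ≠ ⊤ := by rw [hT]; exact ENNReal.ofReal_ne_top
  have hintΓ : Integrable cost Γ := by
    refine ⟨cost_continuous.aestronglyMeasurable, ?_⟩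
    rw [hasFiniteIntegral_iff_norm]
    have hcongr : ∫⁻ p, ENNReal.ofReal ‖cost p‖ ∂Γ = ∫⁻ p, C p ∂Γ := by
      refine lintegral_congr fun p => ?_
      rw [hC, Real.norm_eq_abs, abs_of_nonneg (cost_nonneg p)]
    rw [hcongr]
    exact lt_of_le_of_lt hLΓ (lt_top_iff_ne_top.mpr hTne)
  have hWle := w2sq_le hΓc hintΓ
  have hval : ∫ p, cost p ∂Γ = (∫⁻ p, C p ∂Γ).toReal := by
    rw [integral_eq_lintegral_of_nonneg_ae (Eventually.of_forall cost_nonneg)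
      cost_continuous.aestronglyMeasurable]
  have hfinal : (∫⁻ p, C p ∂Γ).toReal
      ≤ (W2sq μ μ0 + ε) + (2 * ε + 2 * (R ^ 2 * ε + δ)) := by
    have h5 := ENNReal.toReal_mono hTne hLΓ
    rw [hT, ENNReal.toReal_ofReal (by
      have hz : (0:ℝ) ≤ R ^ 2 * ε + δ := by positivity
      nlinarith)] at h5
    exact h5
  rw [hval] at hWle
  linarith


/-! ### Helpers for the existence proof -/

lemma secondMoment_le {μ μ0 : Measure (Ed d)} (hμ : P2 μ) (h0 : P2 μ0) :
    ∫⁻ x, ENNReal.ofReal (‖x‖ ^ 2) ∂μ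
      ≤ ENNReal.ofReal (2 * (W2sq μ μ0 + 1) + 2 * ∫ y, ‖y‖ ^ 2 ∂μ0) := by
  obtain ⟨γ, hγc, hγi, hγcost⟩ := exists_coupling hμ h0 one_pos
  have hmn : Measurable (fun x : Ed d => ENNReal.ofReal (‖x‖ ^ 2)) :=
    (continuous_norm.pow 2).measurable.ennreal_ofReal
  have h1 : ∫⁻ x, ENNReal.ofReal (‖x‖ ^ 2) ∂μ
      = ∫⁻ p : Ed d × Ed d, ENNReal.ofReal (‖p.1‖ ^ 2) ∂γ := by
    rw [← hγc.1, lintegral_map hmn measurable_fst]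
  have h2 : ∫⁻ p : Ed d × Ed d, ENNReal.ofReal (‖p.2‖ ^ 2) ∂γ
      = ENNReal.ofReal (∫ y, ‖y‖ ^ 2 ∂μ0) := by
    have e1 : ∫⁻ y, ENNReal.ofReal (‖y‖ ^ 2) ∂μ0
        = ∫⁻ p : Ed d × Ed d, ENNReal.ofReal (‖p.2‖ ^ 2) ∂γ := by
      rw [← hγc.2, lintegral_map hmn measurable_snd]
    rw [← e1]
    exact (ofReal_integral_eq_lintegral_ofReal h0.2
      (Eventually.of_forall fun y => sq_nonneg _)).symm
  have hpt : ∀ p : Ed d × Ed d, ENNReal.ofReal (‖p.1‖ ^ 2)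
      ≤ 2 * ENNReal.ofReal (cost p) + 2 * ENNReal.ofReal (‖p.2‖ ^ 2) := by
    intro p
    have hn : ‖p.1‖ ≤ ‖p.1 - p.2‖ + ‖p.2‖ := by
      calc ‖p.1‖ = ‖p.1 - p.2 + p.2‖ := by rw [sub_add_cancel]
        _ ≤ _ := norm_add_le _ _
    have hsq : ‖p.1‖ ^ 2 ≤ 2 * cost p + 2 * ‖p.2‖ ^ 2 := by
      have h1 := norm_nonneg (p.1 - p.2)
      have h2 := norm_nonneg p.2
      have h3 := norm_nonneg p.1
      have hcst : cost p = ‖p.1 - p.2‖ ^ 2 := rfl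
      nlinarith [sq_nonneg (‖p.1 - p.2‖ - ‖p.2‖)]
    have e2 : ENNReal.ofReal (2 * cost p + 2 * ‖p.2‖ ^ 2)
        = ENNReal.ofReal (2 * cost p) + ENNReal.ofReal (2 * ‖p.2‖ ^ 2) :=
      ENNReal.ofReal_add (mul_nonneg (by norm_num) (cost_nonneg p)) (by positivity)
    have e3 : ENNReal.ofReal (2 * cost p) = 2 * ENNReal.ofReal (cost p) := by
      rw [ENNReal.ofReal_mul (by norm_num : (0:ℝ) ≤ 2), ENNReal.ofReal_ofNat]
    have e4 : ENNReal.ofReal (2 * ‖p.2‖ ^ 2) = 2 * ENNReal.ofReal (‖p.2‖ ^ 2) := by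
      rw [ENNReal.ofReal_mul (by norm_num : (0:ℝ) ≤ 2), ENNReal.ofReal_ofNat]
    calc ENNReal.ofReal (‖p.1‖ ^ 2) ≤ ENNReal.ofReal (2 * cost p + 2 * ‖p.2‖ ^ 2) :=
        ENNReal.ofReal_le_ofReal hsq
      _ = 2 * ENNReal.ofReal (cost p) + 2 * ENNReal.ofReal (‖p.2‖ ^ 2) := by
        rw [e2, e3, e4]
  have hC : ∫⁻ p, ENNReal.ofReal (cost p) ∂γ = ENNReal.ofReal (∫ p, cost p ∂γ) :=
    (ofReal_integral_eq_lintegral_ofReal hγi (Eventually.of_forall cost_nonneg)).symm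
  have hW0 := w2sq_nonneg μ μ0
  have hM0 : (0:ℝ) ≤ ∫ y, ‖y‖ ^ 2 ∂μ0 := integral_nonneg fun y => sq_nonneg _
  have efin : ENNReal.ofReal (2 * (W2sq μ μ0 + 1) + 2 * ∫ y, ‖y‖ ^ 2 ∂μ0)
      = 2 * ENNReal.ofReal (W2sq μ μ0 + 1) + 2 * ENNReal.ofReal (∫ y, ‖y‖ ^ 2 ∂μ0) := by
    have e5 : ENNReal.ofReal (2 * (W2sq μ μ0 + 1) + 2 * ∫ y, ‖y‖ ^ 2 ∂μ0)
        = ENNReal.ofReal (2 * (W2sq μ μ0 + 1)) + ENNReal.ofReal (2 * ∫ y, ‖y‖ ^ 2 ∂μ0) :=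
      ENNReal.ofReal_add (by linarith) (by linarith)
    have e6 : ENNReal.ofReal (2 * (W2sq μ μ0 + 1))
        = 2 * ENNReal.ofReal (W2sq μ μ0 + 1) := by
      rw [ENNReal.ofReal_mul (by norm_num : (0:ℝ) ≤ 2), ENNReal.ofReal_ofNat]
    have e7 : ENNReal.ofReal (2 * ∫ y, ‖y‖ ^ 2 ∂μ0)
        = 2 * ENNReal.ofReal (∫ y, ‖y‖ ^ 2 ∂μ0) := by
      rw [ENNReal.ofReal_mul (by norm_num : (0:ℝ) ≤ 2), ENNReal.ofReal_ofNat]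
    rw [e5, e6, e7]
  rw [h1, efin]
  calc ∫⁻ p, ENNReal.ofReal (‖p.1‖ ^ 2) ∂γ
      ≤ ∫⁻ p : Ed d × Ed d, (2 * ENNReal.ofReal (cost p)
          + 2 * ENNReal.ofReal (‖p.2‖ ^ 2)) ∂γ := lintegral_mono hpt
    _ = 2 * ∫⁻ p, ENNReal.ofReal (cost p) ∂γ
        + 2 * ∫⁻ p, ENNReal.ofReal (‖p.2‖ ^ 2) ∂γ := by
      have hmc : Measurable fun p : Ed d × Ed d => ENNReal.ofReal (cost p) :=
        cost_continuous.measurable.ennreal_ofReal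
      have hm2 : Measurable fun p : Ed d × Ed d => ENNReal.ofReal (‖p.2‖ ^ 2) :=
        hmn.comp measurable_snd
      rw [lintegral_add_left (hmc.const_mul 2), lintegral_const_mul 2 hmc,
        lintegral_const_mul 2 hm2]
    _ ≤ 2 * ENNReal.ofReal (W2sq μ μ0 + 1)
        + 2 * ENNReal.ofReal (∫ y, ‖y‖ ^ 2 ∂μ0) := by
      rw [hC, h2]
      exact add_le_add (mul_le_mul_right (ENNReal.ofReal_le_ofReal hγcost) 2) le_rfl

/-- `∫ ψ(dμ/dπ) dπ` with `ψ(t) = t log t - t + 1 ≥ 0`, valued in `ℝ≥0∞`. -/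
def psiEnt (π μ : Measure (Ed d)) : ℝ≥0∞ :=
  ∫⁻ x, ENNReal.ofReal (rde π μ x * Real.log (rde π μ x) - rde π μ x + 1) ∂π

lemma psi_nonneg {t : ℝ} (ht : 0 ≤ t) : 0 ≤ t * Real.log t - t + 1 := by
  have := sub_one_le_mul_log ht
  linarith

lemma psi_measurable (π μ : Measure (Ed d)) :
    Measurable (fun x => rde π μ x * Real.log (rde π μ x) - rde π μ x + 1) := by
  have h1 : Measurable (fun x => rde π μ x * Real.log (rde π μ x)) :=
    Real.continuous_mul_log.measurable.comp (measurable_rde π μ)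
  exact (h1.sub (measurable_rde π μ)).add measurable_const

lemma psiEnt_eq (π μ : Measure (Ed d)) [IsProbabilityMeasure π] [IsProbabilityMeasure μ]
    (hac : μ ≪ π) (hint : Integrable (fun x => Real.log (rde π μ x)) μ) :
    psiEnt π μ = ENNReal.ofReal (Ent π μ) := by
  have hφ := integrable_mul_log π μ hac hint
  have hr : Integrable (fun x => rde π μ x) π := Measure.integrable_toReal_rnDeriv
  have hsub0 : Integrable (fun x => rde π μ x * Real.log (rde π μ x) - rde π μ x) π :=
    hφ.sub hr
  have hψ : Integrable (fun x => rde π μ x * Real.log (rde π μ x) - rde π μ x + 1) π :=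
    hsub0.add (integrable_const 1)
  have hsub : Integrable (fun x => rde π μ x * Real.log (rde π μ x) - rde π μ x) π :=
    hφ.sub hr
  have hval : ∫ x, (rde π μ x * Real.log (rde π μ x) - rde π μ x + 1) ∂π = Ent π μ := by
    rw [integral_add hsub (integrable_const 1), integral_sub hφ hr,
      integral_rde π μ hac, ent_eq_integral_pi π μ hac]
    simp
  rw [psiEnt, ← hval, ← ofReal_integral_eq_lintegral_ofReal hψ
    (Eventually.of_forall fun x => psi_nonneg (rde_nonneg π μ x))]

lemma gd_of_psiEnt_ne_top (π μ : Measure (Ed d)) [IsProbabilityMeasure π]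
    [IsProbabilityMeasure μ] (hP2 : P2 μ) (hac : μ ≪ π) (hfin : psiEnt π μ ≠ ⊤) :
    Gd π μ := by
  have hψ : Integrable (fun x => rde π μ x * Real.log (rde π μ x) - rde π μ x + 1) π := by
    refine ⟨(psi_measurable π μ).aestronglyMeasurable, ?_⟩
    rw [hasFiniteIntegral_iff_norm]
    have hcg : ∫⁻ x, ENNReal.ofReal ‖rde π μ x * Real.log (rde π μ x) - rde π μ x + 1‖ ∂π
        = psiEnt π μ := by
      refine lintegral_congr fun x => ?_
      rw [Real.norm_eq_abs, abs_of_nonneg (psi_nonneg (rde_nonneg π μ x))]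
    rw [hcg]
    exact lt_top_iff_ne_top.mpr hfin
  have hr : Integrable (fun x => rde π μ x) π := Measure.integrable_toReal_rnDeriv
  have hφ : Integrable (fun x => rde π μ x * Real.log (rde π μ x)) π := by
    have hfe : (fun x => rde π μ x * Real.log (rde π μ x))
        = fun x => (rde π μ x * Real.log (rde π μ x) - rde π μ x + 1)
          + (rde π μ x - 1) := by
      funext x
      ring
    rw [hfe]
    exact hψ.add (hr.sub (integrable_const 1))
  exact ⟨hP2, hac, (integrable_density π μ hac).mpr hφ⟩

lemma tendsto_lintegral_mul_sub {π : Measure (Ed d)} {g : ℕ → Ed d → ℝ≥0∞}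
    {f : Ed d → ℝ≥0∞} (h : Ed d → ℝ≥0∞)
    (hgm : ∀ n, Measurable (g n)) (hm : Measurable h) (hfm : Measurable f)
    (hne : ∀ x, h x ≠ ⊤)
    (hfin : ∫⁻ x, h x * f x ∂π ≠ ⊤)
    (hftop : ∀ᵐ x ∂π, f x ≠ ⊤)
    (hconv : ∀ᵐ x ∂π, Tendsto (fun n => g n x) atTop (nhds (f x))) :
    Tendsto (fun n => ∫⁻ x, h x * (f x - g n x) ∂π) atTop (nhds 0) := by
  have key := tendsto_lintegral_of_dominated_convergence (μ := π)
    (F := fun n x => h x * (f x - g n x)) (f := fun _ => 0) (bound := fun x => h x * f x)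
    (fun n => hm.mul (hfm.sub (hgm n)))
    (fun n => Eventually.of_forall fun x => mul_le_mul_right tsub_le_self _)
    hfin ?_
  · simpa using key
  · filter_upwards [hconv, hftop] with x hx hf
    have t1 : Tendsto (fun n => f x - g n x) atTop (nhds (f x - f x)) :=
      ENNReal.Tendsto.sub tendsto_const_nhds hx (Or.inl hf)
    rw [tsub_self] at t1
    have t2 := ENNReal.Tendsto.const_mul (a := h x) t1 (Or.inr (hne x))
    rw [mul_zero] at t2
    exact t2

lemma ofReal_abs_sub (a b : ℝ) (ha : 0 ≤ a) (hb : 0 ≤ b) :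
    ENNReal.ofReal |a - b|
      = (ENNReal.ofReal a - ENNReal.ofReal b) + (ENNReal.ofReal b - ENNReal.ofReal a) := by
  rcases le_total a b with h | h
  · rw [abs_of_nonpos (by linarith), neg_sub, ← ENNReal.ofReal_sub b ha,
      tsub_eq_zero_of_le (ENNReal.ofReal_le_ofReal h), zero_add]
  · rw [abs_of_nonneg (by linarith), ← ENNReal.ofReal_sub a hb,
      tsub_eq_zero_of_le (ENNReal.ofReal_le_ofReal h), add_zero]

lemma Gd_pi {π : Measure (Ed d)} (hπ : P2 π) : Gd π π ∧ Ent π π = 0 := by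
  haveI := hπ.1
  have hae : (fun x => Real.log (rde π π x)) =ᵐ[π] fun _ => (0:ℝ) := by
    filter_upwards [Measure.rnDeriv_self π] with x hx
    simp [rde, hx]
  have hint : Integrable (fun x => Real.log (rde π π x)) π :=
    (integrable_const (0:ℝ)).congr hae.symm
  refine ⟨⟨hπ, Measure.AbsolutelyContinuous.rfl, hint⟩, ?_⟩
  rw [Ent, integral_congr_ae hae, integral_zero]

/-! ### Existence of the minimizer -/

set_option maxHeartbeats 3000000 in
theorem exists_min (F : Measure (Ed d) → ℝ) (DF : Measure (Ed d) → Ed d → ℝ)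
    (π : Measure (Ed d)) (L_F C_F σ τ : ℝ)
    (hFbd : ∃ c : ℝ, ∀ μ : Measure (Ed d), P2 μ → c ≤ F μ)
    (hflat : IsFlatDeriv F DF) (hconv : FlatConvex F DF) (hlip : FlatLip DF L_F)
    (hbdd : FlatBdd DF C_F) (hσ : 0 < σ) (hτ : 0 < τ) (hπ : P2 π)
    (μ0 : Measure (Ed d)) (h0P2 : P2 μ0) (h0ac : μ0 ≪ π) :
    ∃ μ, Gd π μ ∧ ∀ ν, Gd π ν →
      F μ + σ * Ent π μ + W2sq μ μ0 / (2 * τ)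
        ≤ F ν + σ * Ent π ν + W2sq ν μ0 / (2 * τ) := by
  classical
  obtain ⟨c, hc⟩ := hFbd
  haveI hπprob := hπ.1
  set J : Measure (Ed d) → ℝ :=
    fun μ => F μ + σ * Ent π μ + W2sq μ μ0 / (2 * τ) with hJ
  set S : Set ℝ := J '' {μ | Gd π μ} with hS
  have hπGd := Gd_pi hπ
  have hSne : S.Nonempty := ⟨_, ⟨π, hπGd.1, rfl⟩⟩
  have hJlb : ∀ μ, Gd π μ → c ≤ J μ := by
    intro μ hg
    haveI := hg.1.1
    have h1 := hc μ hg.1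
    have h2 := ent_nonneg π μ hg.2.1
    have h3 := w2sq_nonneg μ μ0
    have h4 : 0 ≤ W2sq μ μ0 / (2 * τ) := by positivity
    have h5 : 0 ≤ σ * Ent π μ := mul_nonneg hσ.le h2
    simp only [hJ]
    linarith
  have hSbd : BddBelow S := by
    refine ⟨c, ?_⟩
    rintro r ⟨μ, hg, rfl⟩
    exact hJlb μ hg
  set m : ℝ := sInf S with hm
  have hseqex : ∀ n : ℕ, ∃ μ, Gd π μ ∧ J μ < m + 1 / ((n:ℝ) + 1) := by
    intro n
    have hpos : (0:ℝ) < 1 / ((n:ℝ) + 1) := by positivity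
    have hlt : m < m + 1 / (n + 1) := by linarith
    obtain ⟨r, ⟨μ, hg, rfl⟩, hr⟩ := exists_lt_of_csInf_lt hSne hlt
    exact ⟨μ, hg, hr⟩
  choose seq hseqGd hseqlt using hseqex
  have hprob : ∀ n, IsProbabilityMeasure (seq n) := fun n => (hseqGd n).1.1
  have hmle : ∀ ν, Gd π ν → m ≤ J ν := fun ν hg => csInf_le hSbd ⟨ν, hg, rfl⟩
  have hEnonneg : ∀ n, 0 ≤ Ent π (seq n) := by
    intro n
    haveI := hprob n
    exact ent_nonneg π _ (hseqGd n).2.1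
  -- uniform bounds along the sequence
  have hJub : ∀ n, J (seq n) < m + 1 := by
    intro n
    have h1 : 1 / ((n:ℝ) + 1) ≤ 1 := by
      rw [div_le_one (by positivity)]
      linarith [Nat.cast_nonneg (α := ℝ) n]
    have h2 := hseqlt n
    calc J (seq n) < m + 1 / ((n:ℝ) + 1) := h2
      _ ≤ m + 1 := by linarith
  have hEub : ∀ n, Ent π (seq n) ≤ (m + 1 - c) / σ := by
    intro n
    have h1 := hJub n
    have h2 := hc _ (hseqGd n).1
    have h3 := w2sq_nonneg (seq n) μ0
    have h4 : 0 ≤ W2sq (seq n) μ0 / (2 * τ) := by positivity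
    rw [le_div_iff₀ hσ]
    simp only [hJ] at h1
    linarith
  have hWub : ∀ n, W2sq (seq n) μ0 ≤ 2 * τ * (m + 1 - c) := by
    intro n
    have h1 := hJub n
    have h2 := hc _ (hseqGd n).1
    have h5 : 0 ≤ σ * Ent π (seq n) := mul_nonneg hσ.le (hEnonneg n)
    simp only [hJ] at h1
    have h6 : W2sq (seq n) μ0 / (2 * τ) ≤ m + 1 - c := by linarith
    rw [div_le_iff₀ (by linarith : (0:ℝ) < 2 * τ)] at h6
    linarith
  -- Hellinger Cauchy estimate
  have hgap : ∀ n k : ℕ, Hsq π (seq n) (seq k)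
      ≤ 2 / σ * (1 / ((n:ℝ) + 1) + 1 / ((k:ℝ) + 1)) := by
    intro n k
    obtain ⟨hGm, hkey⟩ := key_gap hσ hτ hπ h0P2 hflat hconv hlip hbdd
      (hseqGd n) (hseqGd k)
    have h1 := hmle _ hGm
    have h2 := hseqlt n
    have h3 := hseqlt k
    simp only [hJ] at h1 h2 h3
    have h4 : σ / 4 * Hsq π (seq n) (seq k)
        ≤ (1 / ((n:ℝ) + 1) + 1 / ((k:ℝ) + 1)) / 2 := by
      linarith
    have h5 := mul_le_mul_of_nonneg_left h4 (by positivity : (0:ℝ) ≤ 4 / σ)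
    have h6 : 4 / σ * (σ / 4 * Hsq π (seq n) (seq k)) = Hsq π (seq n) (seq k) := by
      field_simp
    have h7 : 4 / σ * ((1 / ((n:ℝ) + 1) + 1 / ((k:ℝ) + 1)) / 2)
        = 2 / σ * (1 / ((n:ℝ) + 1) + 1 / ((k:ℝ) + 1)) := by
      field_simp
      ring
    rw [h6, h7] at h5
    exact h5
  -- the square-root densities in L²
  set g : ℕ → Ed d → ℝ := fun n x => Real.sqrt (rde π (seq n) x) with hgdef
  have hgm : ∀ n, Measurable (g n) := fun n => (measurable_rde π (seq n)).sqrt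
  have hgsq : ∀ n x, g n x ^ 2 = rde π (seq n) x :=
    fun n x => Real.sq_sqrt (rde_nonneg _ _ _)
  have hmem : ∀ n, MemLp (g n) 2 π := by
    intro n
    haveI := hprob n
    refine (memLp_two_iff_integrable_sq (hgm n).aestronglyMeasurable).mpr ?_
    refine (Measure.integrable_toReal_rnDeriv (μ := seq n) (ν := π)).congr ?_
    exact Eventually.of_forall fun x => (hgsq n x).symm
  set fL : ℕ → Lp ℝ 2 π := fun n => ((hmem n).toLp (g n)) with hfL
  have hdist : ∀ n k, dist (fL n) (fL k) ^ 2 = Hsq π (seq n) (seq k) := by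
    intro n k
    rw [dist_eq_norm, ← real_inner_self_eq_norm_sq, L2.inner_def]
    simp only [Hsq]
    refine integral_congr_ae ?_
    filter_upwards [Lp.coeFn_sub (fL n) (fL k), (hmem n).coeFn_toLp,
      (hmem k).coeFn_toLp] with x h1 h2 h3
    simp only [RCLike.inner_apply, starRingEnd_apply, star_trivial]
    rw [h1]
    simp only [Pi.sub_apply]
    rw [h2, h3]
    simp only [hgdef]
    ring
  have hnorm1 : ∀ n, ‖fL n‖ ^ 2 = 1 := by
    intro n
    haveI := hprob n
    rw [← real_inner_self_eq_norm_sq, L2.inner_def]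
    have hcg : ∫ x, (inner ℝ (⇑(fL n) x) (⇑(fL n) x) : ℝ) ∂π
        = ∫ x, rde π (seq n) x ∂π := by
      refine integral_congr_ae ?_
      filter_upwards [(hmem n).coeFn_toLp] with x h2
      simp only [RCLike.inner_apply, starRingEnd_apply, star_trivial]
      rw [h2]
      simp only [hgdef]
      rw [← sq, Real.sq_sqrt (rde_nonneg π (seq n) x)]
    rw [hcg, integral_rde π (seq n) (hseqGd n).2.1]
  have hcauchy : CauchySeq fL := by
    rw [Metric.cauchySeq_iff']
    intro ε hε
    obtain ⟨N, hN⟩ := exists_nat_one_div_lt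
      (show (0:ℝ) < σ * ε ^ 2 / 4 by positivity)
    refine ⟨N, fun n hn => ?_⟩
    have h1 := hgap n N
    have hd2 : dist (fL n) (fL N) ^ 2 ≤ 2 / σ * (1 / (n + 1) + 1 / (N + 1)) := by
      rw [hdist n N]
      exact h1
    have h2 : 1 / ((n:ℝ) + 1) ≤ 1 / ((N:ℝ) + 1) := by
      apply one_div_le_one_div_of_le (by positivity)
      have : (N:ℝ) ≤ n := Nat.cast_le.mpr hn
      linarith
    have h3 : dist (fL n) (fL N) ^ 2 < ε ^ 2 := by
      have h4 : 2 / σ * (1 / ((n:ℝ) + 1) + 1 / ((N:ℝ) + 1))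
          ≤ 2 / σ * (2 * (1 / ((N:ℝ) + 1))) := by
        apply mul_le_mul_of_nonneg_left _ (by positivity)
        linarith
      have h5 : 2 / σ * (2 * (1 / ((N:ℝ) + 1))) < 2 / σ * (2 * (σ * ε ^ 2 / 4)) := by
        apply mul_lt_mul_of_pos_left _ (by positivity)
        linarith
      have h6 : 2 / σ * (2 * (σ * ε ^ 2 / 4)) = ε ^ 2 := by
        field_simp
        ring
      linarith
    exact lt_of_pow_lt_pow_left₀ 2 hε.le h3
  obtain ⟨fstar, hfstar⟩ := cauchySeq_tendsto_of_complete hcauchy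
  haveI : Fact ((1:ℝ≥0∞) ≤ 2) := ⟨by norm_num⟩
  have htm : TendstoInMeasure π (fun n => ⇑(fL n)) atTop ⇑fstar :=
    tendstoInMeasure_of_tendsto_Lp hfstar
  obtain ⟨ns, hns, haesub⟩ := htm.exists_seq_tendsto_ae
  -- the limit density
  set rstar : Ed d → ℝ := fun x => (⇑fstar x) ^ 2 with hrstar
  have hmrstar : Measurable rstar := ((Lp.stronglyMeasurable fstar).measurable).pow_const 2
  have hrstar_nonneg : ∀ x, 0 ≤ rstar x := fun x => sq_nonneg _
  have haeconv : ∀ᵐ x ∂π, Tendsto (fun i => rde π (seq (ns i)) x) atTop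
      (nhds (rstar x)) := by
    have hall : ∀ᵐ x ∂π, ∀ i, ⇑(fL (ns i)) x = g (ns i) x :=
      ae_all_iff.mpr fun i => (hmem (ns i)).coeFn_toLp
    filter_upwards [haesub, hall] with x hx hcoe
    have h1 : Tendsto (fun i => g (ns i) x) atTop (nhds (⇑fstar x)) :=
      hx.congr fun i => hcoe i
    have h2 := h1.pow 2
    refine h2.congr fun i => ?_
    exact hgsq (ns i) x
  -- norms converge, total mass of the limit is 1
  have hnormstar : ‖fstar‖ ^ 2 = 1 := by
    have hn : Tendsto (fun n => ‖fL n‖ ^ 2) atTop (nhds (‖fstar‖ ^ 2)) :=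
      (hfstar.norm).pow 2
    have heq : (fun n => ‖fL n‖ ^ 2) = fun _ => (1:ℝ) := funext hnorm1
    rw [heq] at hn
    exact tendsto_nhds_unique hn tendsto_const_nhds
  have hint_rstar : Integrable rstar π := (Lp.memLp fstar).integrable_sq
  have hrstar_int1 : ∫ x, rstar x ∂π = 1 := by
    rw [← hnormstar, ← real_inner_self_eq_norm_sq, L2.inner_def]
    refine integral_congr_ae (Eventually.of_forall fun x => ?_)
    simp only [RCLike.inner_apply, starRingEnd_apply, star_trivial, hrstar, sq]
  set rE : Ed d → ℝ≥0∞ := fun x => ENNReal.ofReal (rstar x) with hrE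
  have hmrE : Measurable rE := hmrstar.ennreal_ofReal
  set μstar : Measure (Ed d) := π.withDensity rE with hμstar
  have hrEint1 : ∫⁻ x, rE x ∂π = 1 := by
    rw [hrE, ← ofReal_integral_eq_lintegral_ofReal hint_rstar
      (Eventually.of_forall hrstar_nonneg), hrstar_int1, ENNReal.ofReal_one]
  haveI hstarprob : IsProbabilityMeasure μstar := by
    constructor
    rw [hμstar, withDensity_apply _ MeasurableSet.univ, setLIntegral_univ, hrEint1]
  have hacstar : μstar ≪ π := hμstar ▸ withDensity_absolutelyContinuous π rE
  have hrnd : μstar.rnDeriv π =ᵐ[π] rE := hμstar ▸ Measure.rnDeriv_withDensity π hmrE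
  have hrde_star : rde π μstar =ᵐ[π] rstar := by
    filter_upwards [hrnd] with x hx
    rw [rde, hx, hrE, ENNReal.toReal_ofReal (hrstar_nonneg x)]
  -- ENNReal-valued a.e. convergence of the densities
  have haeE : ∀ᵐ x ∂π, Tendsto (fun i => (seq (ns i)).rnDeriv π x) atTop
      (nhds (rE x)) := by
    have hfinall : ∀ᵐ x ∂π, ∀ i, (seq (ns i)).rnDeriv π x < ⊤ :=
      ae_all_iff.mpr fun i => (seq (ns i)).rnDeriv_lt_top π
    filter_upwards [haeconv, hfinall] with x hx hfin
    have h1 : ∀ i, (seq (ns i)).rnDeriv π x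
        = ENNReal.ofReal (rde π (seq (ns i)) x) :=
      fun i => (ENNReal.ofReal_toReal (hfin i).ne).symm
    have h2 : Tendsto (fun i => ENNReal.ofReal (rde π (seq (ns i)) x)) atTop
        (nhds (rE x)) := ENNReal.tendsto_ofReal hx
    exact h2.congr fun i => (h1 i).symm
  have hmn : Measurable (fun x : Ed d => ENNReal.ofReal (‖x‖ ^ 2)) :=
    (continuous_norm.pow 2).measurable.ennreal_ofReal
  -- uniform second-moment bound along the sequence
  set K2 : ℝ := 2 * (2 * τ * (m + 1 - c) + 1) + 2 * ∫ y, ‖y‖ ^ 2 ∂μ0 with hK2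
  have hmom_n : ∀ n, ∫⁻ x, ENNReal.ofReal (‖x‖ ^ 2) * (seq n).rnDeriv π x ∂π
      ≤ ENNReal.ofReal K2 := by
    intro n
    haveI := hprob n
    have e1 : π.withDensity ((seq n).rnDeriv π) = seq n :=
      @Measure.withDensity_rnDeriv_eq _ _ _ _ (Measure.haveLebesgueDecomposition_of_sigmaFinite _ π) (hseqGd n).2.1
    have h1 : ∫⁻ x, ENNReal.ofReal (‖x‖ ^ 2) ∂(seq n)
        = ∫⁻ x, ENNReal.ofReal (‖x‖ ^ 2) * (seq n).rnDeriv π x ∂π := by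
      conv_lhs => rw [← e1]
      rw [lintegral_withDensity_eq_lintegral_mul _ (Measure.measurable_rnDeriv _ _) hmn]
      exact lintegral_congr fun x => by simp [mul_comm]
    rw [← h1]
    refine le_trans (secondMoment_le (hseqGd n).1 h0P2) (ENNReal.ofReal_le_ofReal ?_)
    have := hWub n
    simp only [hK2]
    linarith
  -- Fatou: second moment of the limit
  have hFatou_mom : ∫⁻ x, ENNReal.ofReal (‖x‖ ^ 2) * rE x ∂π ≤ ENNReal.ofReal K2 := by
    have hmeas_i : ∀ i : ℕ, Measurable fun x =>
        ENNReal.ofReal (‖x‖ ^ 2) * (seq (ns i)).rnDeriv π x :=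
      fun i => hmn.mul (Measure.measurable_rnDeriv _ _)
    have h1 : ∫⁻ x, ENNReal.ofReal (‖x‖ ^ 2) * rE x ∂π
        ≤ liminf (fun i => ∫⁻ x,
            ENNReal.ofReal (‖x‖ ^ 2) * (seq (ns i)).rnDeriv π x ∂π) atTop := by
      refine le_trans (le_of_eq (lintegral_congr_ae ?_)) (lintegral_liminf_le hmeas_i)
      filter_upwards [haeE] with x hx
      exact (Tendsto.liminf_eq (ENNReal.Tendsto.const_mul hx
        (Or.inr ENNReal.ofReal_ne_top))).symm
    exact le_trans h1 (liminf_le_of_frequently_le'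
      (Frequently.of_forall fun i => hmom_n (ns i)))
  have hP2star : P2 μstar := by
    refine ⟨hstarprob, ?_⟩
    refine ⟨(continuous_norm.pow 2).aestronglyMeasurable, ?_⟩
    rw [hasFiniteIntegral_iff_norm]
    have h1 : ∫⁻ x, ENNReal.ofReal ‖‖x‖ ^ 2‖ ∂μstar
        = ∫⁻ x, ENNReal.ofReal (‖x‖ ^ 2) * rE x ∂π := by
      have h2 : ∫⁻ x, ENNReal.ofReal ‖‖x‖ ^ 2‖ ∂μstar
          = ∫⁻ x, ENNReal.ofReal (‖x‖ ^ 2) ∂μstar :=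
        lintegral_congr fun x => by rw [Real.norm_eq_abs, abs_of_nonneg (sq_nonneg _)]
      rw [h2, hμstar, lintegral_withDensity_eq_lintegral_mul _ hmrE hmn]
      exact lintegral_congr fun x => by simp [mul_comm]
    rw [h1]
    exact lt_of_le_of_lt hFatou_mom ENNReal.ofReal_lt_top
  -- Fatou: entropy of the limit
  have hψcont : Continuous (fun t : ℝ => t * Real.log t - t + 1) :=
    (Real.continuous_mul_log.sub continuous_id).add continuous_const
  set Kstar : ℝ≥0∞ :=
    ∫⁻ x, ENNReal.ofReal (rstar x * Real.log (rstar x) - rstar x + 1) ∂π with hKstar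
  have hpsieq : ∀ i : ℕ, psiEnt π (seq (ns i))
      = ENNReal.ofReal (Ent π (seq (ns i))) := by
    intro i
    haveI := hprob (ns i)
    exact psiEnt_eq π _ (hseqGd (ns i)).2.1 (hseqGd (ns i)).2.2
  have hKstar_le : Kstar ≤ liminf (fun i => psiEnt π (seq (ns i))) atTop := by
    have hmeas_i : ∀ i : ℕ, Measurable fun x => ENNReal.ofReal
        (rde π (seq (ns i)) x * Real.log (rde π (seq (ns i)) x)
          - rde π (seq (ns i)) x + 1) :=
      fun i => (psi_measurable π (seq (ns i))).ennreal_ofReal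
    refine le_trans (le_of_eq (lintegral_congr_ae ?_)) (lintegral_liminf_le hmeas_i)
    filter_upwards [haeconv] with x hx
    have h1 : Tendsto (fun i => rde π (seq (ns i)) x * Real.log (rde π (seq (ns i)) x)
        - rde π (seq (ns i)) x + 1) atTop
        (nhds (rstar x * Real.log (rstar x) - rstar x + 1)) :=
      (hψcont.tendsto _).comp hx
    exact (Tendsto.liminf_eq (ENNReal.tendsto_ofReal h1)).symm
  have hKE : Kstar ≤ ENNReal.ofReal ((m + 1 - c) / σ) := by
    refine le_trans hKstar_le (liminf_le_of_frequently_le'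
      (Frequently.of_forall fun i => ?_))
    rw [hpsieq i]
    exact ENNReal.ofReal_le_ofReal (hEub (ns i))
  have hKstar_ne : Kstar ≠ ⊤ :=
    (lt_of_le_of_lt hKE ENNReal.ofReal_lt_top).ne
  have hpsistar : psiEnt π μstar = Kstar := by
    refine lintegral_congr_ae ?_
    filter_upwards [hrde_star] with x hx
    rw [hx]
  have hGdstar : Gd π μstar :=
    gd_of_psiEnt_ne_top π μstar hP2star hacstar (hpsistar ▸ hKstar_ne)
  have hEntstar : ENNReal.ofReal (Ent π μstar) = Kstar := by
    rw [← hpsistar, psiEnt_eq π μstar hacstar hGdstar.2.2]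
  have hEntstar_nonneg : 0 ≤ Ent π μstar := ent_nonneg π μstar hacstar
  -- the L¹ error terms
  set Er : ℕ → ℝ≥0∞ := fun i => ∫⁻ x, (rE x - (seq (ns i)).rnDeriv π x) ∂π with hErdef
  have hrEne : ∀ x, rE x ≠ ⊤ := fun x => ENNReal.ofReal_ne_top
  have hEtend : Tendsto Er atTop (nhds 0) := by
    have hfin1 : ∫⁻ x, (1:ℝ≥0∞) * rE x ∂π ≠ ⊤ := by
      have he : ∫⁻ x, (1:ℝ≥0∞) * rE x ∂π = ∫⁻ x, rE x ∂π :=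
        lintegral_congr fun x => one_mul _
      rw [he, hrEint1]
      exact ENNReal.one_ne_top
    have h1 := tendsto_lintegral_mul_sub (π := π)
      (g := fun i x => (seq (ns i)).rnDeriv π x) (f := rE) (h := fun _ => 1)
      (fun i => Measure.measurable_rnDeriv _ _) measurable_const hmrE
      (fun x => ENNReal.one_ne_top) hfin1 (Eventually.of_forall hrEne) haeE
    simpa only [one_mul] using h1
  have hMomErr : Tendsto (fun i => ∫⁻ x,
      ENNReal.ofReal (‖x‖ ^ 2) * (rE x - (seq (ns i)).rnDeriv π x) ∂π) atTop (nhds 0) := by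
    exact tendsto_lintegral_mul_sub (π := π)
      (g := fun i x => (seq (ns i)).rnDeriv π x) (f := rE)
      (h := fun x => ENNReal.ofReal (‖x‖ ^ 2))
      (fun i => Measure.measurable_rnDeriv _ _) hmn hmrE
      (fun x => ENNReal.ofReal_ne_top)
      (lt_of_le_of_lt hFatou_mom ENNReal.ofReal_lt_top).ne
      (Eventually.of_forall hrEne) haeE
  -- the reverse error equals the forward error
  have hQE : ∀ i, ∫⁻ x, ((seq (ns i)).rnDeriv π x - rE x) ∂π = Er i := by
    intro i
    haveI := hprob (ns i)
    have hmρ : Measurable ((seq (ns i)).rnDeriv π) := Measure.measurable_rnDeriv _ _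
    have hid1 : ∀ x, ((seq (ns i)).rnDeriv π x ⊓ rE x)
        + ((seq (ns i)).rnDeriv π x - rE x) = (seq (ns i)).rnDeriv π x := by
      intro x
      rcases le_total ((seq (ns i)).rnDeriv π x) (rE x) with h | h
      · rw [inf_eq_left.mpr h, tsub_eq_zero_of_le h, add_zero]
      · rw [inf_eq_right.mpr h, add_comm]
        exact tsub_add_cancel_of_le h
    have hid2 : ∀ x, ((seq (ns i)).rnDeriv π x ⊓ rE x)
        + (rE x - (seq (ns i)).rnDeriv π x) = rE x := by
      intro x
      rcases le_total (rE x) ((seq (ns i)).rnDeriv π x) with h | h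
      · rw [inf_eq_right.mpr h, tsub_eq_zero_of_le h, add_zero]
      · rw [inf_eq_left.mpr h, add_comm]
        exact tsub_add_cancel_of_le h
    have h1 : ∫⁻ x, ((seq (ns i)).rnDeriv π x ⊓ rE x) ∂π
        + ∫⁻ x, ((seq (ns i)).rnDeriv π x - rE x) ∂π = 1 := by
      rw [← lintegral_add_left (hmρ.min hmrE)]
      calc ∫⁻ x, (((seq (ns i)).rnDeriv π x ⊓ rE x)
            + ((seq (ns i)).rnDeriv π x - rE x)) ∂π
          = ∫⁻ x, (seq (ns i)).rnDeriv π x ∂π := lintegral_congr hid1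
        _ = 1 := by
          haveI := Measure.haveLebesgueDecomposition_of_sigmaFinite (seq (ns i)) π
          rw [Measure.lintegral_rnDeriv (hseqGd (ns i)).2.1]
          exact measure_univ
    have h2 : ∫⁻ x, ((seq (ns i)).rnDeriv π x ⊓ rE x) ∂π + Er i = 1 := by
      rw [hErdef, ← lintegral_add_left (hmρ.min hmrE)]
      calc ∫⁻ x, (((seq (ns i)).rnDeriv π x ⊓ rE x)
            + (rE x - (seq (ns i)).rnDeriv π x)) ∂π
          = ∫⁻ x, rE x ∂π := lintegral_congr hid2
        _ = 1 := hrEint1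
    have hminfin : ∫⁻ x, ((seq (ns i)).rnDeriv π x ⊓ rE x) ∂π ≠ ⊤ := by
      have hle : ∫⁻ x, ((seq (ns i)).rnDeriv π x ⊓ rE x) ∂π ≤ 1 := by
        refine le_trans (lintegral_mono fun x => min_le_right _ _) ?_
        exact le_of_eq hrEint1
      exact (lt_of_le_of_lt hle ENNReal.one_lt_top).ne
    rw [← h2] at h1
    exact WithTop.add_left_cancel hminfin h1
  -- real L¹ distance
  have hL1 : ∀ i, ∫ x, |rde π (seq (ns i)) x - rstar x| ∂π = (Er i + Er i).toReal := by
    intro i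
    haveI := hprob (ns i)
    have hmρ : Measurable ((seq (ns i)).rnDeriv π) := Measure.measurable_rnDeriv _ _
    have hiabs : Integrable (fun x => |rde π (seq (ns i)) x - rstar x|) π :=
      ((Measure.integrable_toReal_rnDeriv).sub hint_rstar).abs
    rw [integral_eq_lintegral_of_nonneg_ae (Eventually.of_forall fun x => abs_nonneg _)
      hiabs.1]
    congr 1
    calc ∫⁻ x, ENNReal.ofReal |rde π (seq (ns i)) x - rstar x| ∂π
        = ∫⁻ x, (((seq (ns i)).rnDeriv π x - rE x)
            + (rE x - (seq (ns i)).rnDeriv π x)) ∂π := by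
          refine lintegral_congr_ae ?_
          filter_upwards [(seq (ns i)).rnDeriv_lt_top π] with x hx
          have hρx : (seq (ns i)).rnDeriv π x
              = ENNReal.ofReal (rde π (seq (ns i)) x) :=
            (ENNReal.ofReal_toReal hx.ne).symm
          rw [hρx, hrE]
          exact ofReal_abs_sub _ _ (rde_nonneg _ _ _) (hrstar_nonneg x)
      _ = Er i + Er i := by
          rw [lintegral_add_left (f := fun x => (seq (ns i)).rnDeriv π x - rE x) (hmρ.sub hmrE), hQE i]
  -- rewriting the surgery error terms via the rnDeriv of μstar
  have hmass_eq : ∀ i, ∫⁻ x, (μstar.rnDeriv π x - (seq (ns i)).rnDeriv π x) ∂π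
      = Er i := by
    intro i
    refine lintegral_congr_ae ?_
    filter_upwards [hrnd] with x hx
    rw [hx]
  have hmom_eq : ∀ i, ∫⁻ x,
      ENNReal.ofReal (‖x‖ ^ 2) * (μstar.rnDeriv π x - (seq (ns i)).rnDeriv π x) ∂π
      = ∫⁻ x, ENNReal.ofReal (‖x‖ ^ 2) * (rE x - (seq (ns i)).rnDeriv π x) ∂π := by
    intro i
    refine lintegral_congr_ae ?_
    filter_upwards [hrnd] with x hx
    rw [hx]
  -- frequently the entropy of the limit is almost below that of the sequence
  have hfreqEnt : ∀ η3 : ℝ, 0 < η3 →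
      ∃ᶠ i in atTop, Ent π μstar ≤ Ent π (seq (ns i)) + η3 := by
    intro η3 hη3
    by_cases hcase : Ent π μstar ≤ η3
    · refine Frequently.of_forall fun i => ?_
      have h1 := hEnonneg (ns i)
      linarith
    · push_neg at hcase
      by_contra hcon
      rw [Filter.not_frequently] at hcon
      have hev : ∀ᶠ i in atTop, psiEnt π (seq (ns i))
          ≤ ENNReal.ofReal (Ent π μstar - η3) := by
        filter_upwards [hcon] with i hi
        push_neg at hi
        rw [hpsieq i]
        exact ENNReal.ofReal_le_ofReal (by linarith)
      have hliminf : liminf (fun i => psiEnt π (seq (ns i))) atTop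
          ≤ ENNReal.ofReal (Ent π μstar - η3) :=
        liminf_le_of_frequently_le' hev.frequently
      have hlt : ENNReal.ofReal (Ent π μstar - η3) < ENNReal.ofReal (Ent π μstar) :=
        (ENNReal.ofReal_lt_ofReal_iff (by linarith)).mpr (by linarith)
      have hle : ENNReal.ofReal (Ent π μstar) ≤ ENNReal.ofReal (Ent π μstar - η3) := by
        calc ENNReal.ofReal (Ent π μstar) = Kstar := hEntstar
          _ ≤ liminf (fun i => psiEnt π (seq (ns i))) atTop := hKstar_le
          _ ≤ _ := hliminf
      exact absurd hle (not_le.mpr hlt)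
  -- tail control for μ0
  have htailtend : Tendsto (fun n : ℕ => ∫⁻ y in {y : Ed d | (n:ℝ) < ‖y‖},
      ENNReal.ofReal (‖y‖ ^ 2) ∂μ0) atTop (nhds 0) := by
    haveI := h0P2.1
    have hμ0fin : ∫⁻ y, ENNReal.ofReal (‖y‖ ^ 2) ∂μ0 ≠ ⊤ := by
      rw [← ofReal_integral_eq_lintegral_ofReal h0P2.2
        (Eventually.of_forall fun y => sq_nonneg _)]
      exact ENNReal.ofReal_ne_top
    have key := tendsto_lintegral_of_dominated_convergence (μ := μ0)
      (F := fun n y => ({y : Ed d | (n:ℝ) < ‖y‖}).indicator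
        (fun y => ENNReal.ofReal (‖y‖ ^ 2)) y)
      (f := fun _ => 0) (bound := fun y => ENNReal.ofReal (‖y‖ ^ 2))
      (fun n => hmn.indicator (measurableSet_lt measurable_const measurable_norm))
      (fun n => Eventually.of_forall fun y =>
        Set.indicator_le_self' (fun x _ => zero_le) y)
      hμ0fin ?_
    · have heq : ∀ n : ℕ, ∫⁻ y, ({y : Ed d | (n:ℝ) < ‖y‖}).indicator
          (fun y => ENNReal.ofReal (‖y‖ ^ 2)) y ∂μ0
          = ∫⁻ y in {y : Ed d | (n:ℝ) < ‖y‖}, ENNReal.ofReal (‖y‖ ^ 2) ∂μ0 :=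
        fun n => lintegral_indicator
          (measurableSet_lt measurable_const measurable_norm) _
      have key2 := key.congr fun n => heq n
      simpa using key2
    · refine Eventually.of_forall fun y => ?_
      have hev : (fun n : ℕ => ({y : Ed d | (n:ℝ) < ‖y‖}).indicator
          (fun y => ENNReal.ofReal (‖y‖ ^ 2)) y) =ᶠ[atTop] (fun _ => (0:ℝ≥0∞)) := by
        obtain ⟨N, hN⟩ := exists_nat_gt ‖y‖
        rw [Filter.EventuallyEq, Filter.eventually_atTop]
        refine ⟨N, fun n hn => ?_⟩
        rw [Set.indicator_of_notMem]
        simp only [Set.mem_setOf_eq, not_lt]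
        have hcast : (N:ℝ) ≤ (n:ℝ) := Nat.cast_le.mpr hn
        linarith
      exact Filter.Tendsto.congr' hev.symm tendsto_const_nhds
  -- comparison of F values
  have hFle : ∀ i, F μstar ≤ F (seq (ns i)) + |C_F| * (Er i + Er i).toReal := by
    intro i
    have h1 := F_compare hflat hconv hlip hbdd (hseqGd (ns i)).1 hP2star
      (hseqGd (ns i)).2.1 hacstar
    have h2 : ∫ x, |rde π (seq (ns i)) x - rde π μstar x| ∂π
        = ∫ x, |rde π (seq (ns i)) x - rstar x| ∂π := by
      refine integral_congr_ae ?_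
      filter_upwards [hrde_star] with x hx
      rw [hx]
    rw [h2, hL1 i] at h1
    exact h1
  -- conclusion
  refine ⟨μstar, hGdstar, ?_⟩
  intro ν hν
  have hmain : F μstar + σ * Ent π μstar + W2sq μstar μ0 / (2 * τ) ≤ m := by
    refine le_of_forall_pos_le_add fun η hη => ?_
    set η1 : ℝ := η / (4 * (|C_F| + 1)) with hη1
    have hη1pos : 0 < η1 := by positivity
    set η3 : ℝ := η / (4 * σ) with hη3
    have hη3pos : 0 < η3 := by positivity
    set η2 : ℝ := τ * η / 2 with hη2
    have hη2pos : 0 < η2 := by positivity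
    set δ' : ℝ := η2 / 4 with hδ'
    have hδ'pos : 0 < δ' := by positivity
    obtain ⟨R, hR⟩ := (htailtend.eventually_lt_const
      (show (0:ℝ≥0∞) < ENNReal.ofReal δ' from ENNReal.ofReal_pos.mpr hδ'pos)).exists
    set ε' : ℝ := η2 / (2 * (3 + 2 * (R:ℝ) ^ 2)) with hε'
    have hRsq : (0:ℝ) ≤ (R:ℝ) ^ 2 := sq_nonneg _
    have hε'pos : 0 < ε' := by
      rw [hε']
      positivity
    have hbudget : 3 * ε' + 2 * ((R:ℝ) ^ 2 * ε') + 2 * δ' ≤ η2 := by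
      have hden : (0:ℝ) < 2 * (3 + 2 * (R:ℝ) ^ 2) := by positivity
      have h4 : (3 + 2 * (R:ℝ) ^ 2) * ε' = η2 / 2 := by
        rw [hε']
        field_simp
      have h5 : 3 * ε' + 2 * ((R:ℝ) ^ 2 * ε') = (3 + 2 * (R:ℝ) ^ 2) * ε' := by ring
      rw [h5, h4, hδ']
      linarith
    -- eventual and frequent facts
    have hev1 : ∀ᶠ i in atTop, Er i < ENNReal.ofReal (min (η1 / 2) ε') :=
      hEtend.eventually_lt_const (ENNReal.ofReal_pos.mpr (by positivity))
    have hev2 : ∀ᶠ i in atTop, ∫⁻ x,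
        ENNReal.ofReal (‖x‖ ^ 2) * (rE x - (seq (ns i)).rnDeriv π x) ∂π
        < ENNReal.ofReal ε' :=
      hMomErr.eventually_lt_const (ENNReal.ofReal_pos.mpr hε'pos)
    have hev4 : ∀ᶠ i : ℕ in atTop, 1 / ((ns i : ℝ) + 1) ≤ η / 4 := by
      obtain ⟨N, hN⟩ := exists_nat_one_div_lt (show (0:ℝ) < η / 4 by positivity)
      rw [Filter.eventually_atTop]
      refine ⟨N, fun i hi => ?_⟩
      have h1 : (N:ℝ) ≤ (ns i : ℝ) := by
        have := le_trans hi (hns.le_apply (x := i))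
        exact_mod_cast this
      have h2 : 1 / ((ns i : ℝ) + 1) ≤ 1 / ((N:ℝ) + 1) :=
        one_div_le_one_div_of_le (by positivity) (by linarith)
      linarith
    obtain ⟨i, ⟨⟨h1, h2⟩, h4⟩, h3⟩ :=
      (((hev1.and hev2).and hev4).and_frequently (hfreqEnt η3 hη3pos)).exists
    haveI := hprob (ns i)
    -- W2sq comparison via surgery
    have hmassb : ∫⁻ x, (μstar.rnDeriv π x - (seq (ns i)).rnDeriv π x) ∂π
        ≤ ENNReal.ofReal ε' := by
      rw [hmass_eq i]
      exact le_trans h1.le (ENNReal.ofReal_le_ofReal (min_le_right _ _))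
    have hmomb : ∫⁻ x, ENNReal.ofReal (‖x‖ ^ 2)
        * (μstar.rnDeriv π x - (seq (ns i)).rnDeriv π x) ∂π ≤ ENNReal.ofReal ε' := by
      rw [hmom_eq i]
      exact h2.le
    have hsurg := w2sq_surgery (π := π) (μ0 := μ0) (μ := seq (ns i)) (ν := μstar)
      h0P2 (hseqGd (ns i)).1 hP2star (hseqGd (ns i)).2.1 hacstar
      (R := (R:ℝ)) (ε := ε') (δ := δ') (Nat.cast_nonneg R) hε'pos hδ'pos.le
      hmassb hmomb hR.le
    have hWstar : W2sq μstar μ0 ≤ W2sq (seq (ns i)) μ0 + η2 := by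
      have h6 : 3 * ε' + 2 * ((R:ℝ) ^ 2 * ε') + 2 * δ' ≤ η2 := hbudget
      linarith
    -- F comparison
    have hF1 : F μstar ≤ F (seq (ns i)) + η / 4 := by
      have h7 := hFle i
      have h8 : (Er i + Er i).toReal ≤ η1 := by
        have h9 : Er i + Er i ≤ ENNReal.ofReal (η1 / 2) + ENNReal.ofReal (η1 / 2) := by
          have h10 : Er i ≤ ENNReal.ofReal (η1 / 2) :=
            le_trans h1.le (ENNReal.ofReal_le_ofReal (min_le_left _ _))
          exact add_le_add h10 h10
        rw [← ENNReal.ofReal_add (by positivity) (by positivity)] at h9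
        have h11 : (η1 / 2 + η1 / 2 : ℝ) = η1 := by ring
        rw [h11] at h9
        calc (Er i + Er i).toReal ≤ (ENNReal.ofReal η1).toReal :=
            ENNReal.toReal_mono ENNReal.ofReal_ne_top h9
          _ = η1 := ENNReal.toReal_ofReal hη1pos.le
      have h12 : |C_F| * (Er i + Er i).toReal ≤ |C_F| * η1 :=
        mul_le_mul_of_nonneg_left h8 (abs_nonneg _)
      have h13 : |C_F| * η1 ≤ η / 4 := by
        have h14 : |C_F| * η1 ≤ (|C_F| + 1) * η1 :=
          mul_le_mul_of_nonneg_right (by linarith) hη1pos.le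
        have h15 : (|C_F| + 1) * η1 = η / 4 := by
          rw [hη1]
          field_simp
        linarith
      linarith
    -- entropy comparison
    have hE1 : σ * Ent π μstar ≤ σ * Ent π (seq (ns i)) + η / 4 := by
      have h16 := mul_le_mul_of_nonneg_left h3 hσ.le
      have h17 : σ * η3 = η / 4 := by
        rw [hη3]
        field_simp
      rw [mul_add, h17] at h16
      exact h16
    -- W2sq comparison divided
    have hW1 : W2sq μstar μ0 / (2 * τ) ≤ W2sq (seq (ns i)) μ0 / (2 * τ) + η / 4 := by
      have hτ2 : (0:ℝ) < 2 * τ := by linarith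
      have h18 := (div_le_div_iff_of_pos_right hτ2).mpr hWstar
      have h19 : (W2sq (seq (ns i)) μ0 + η2) / (2 * τ)
          = W2sq (seq (ns i)) μ0 / (2 * τ) + η2 / (2 * τ) := by ring
      have h20 : η2 / (2 * τ) = η / 4 := by
        rw [hη2]
        field_simp
        ring
      rw [h19, h20] at h18
      exact h18
    have hJi := hseqlt (ns i)
    simp only [hJ] at hJi
    linarith
  exact le_trans hmain (hmle ν hν)





/-! ### Bridges between `JKOprox` and the real objective -/

lemma bridge {F : Measure (Ed d) → ℝ} {π μ0 : Measure (Ed d)} {σ τ : ℝ}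
    (hσ : 0 < σ) (hπ : P2 π) {μ : Measure (Ed d)} (hμ : Gd π μ) :
    JKOprox F π σ τ μ0 μ = ((F μ + σ * Ent π μ + W2sq μ μ0 / (2 * τ) : ℝ) : EReal) := by
  obtain ⟨hP2, hac, hint⟩ := hμ
  haveI := hP2.1
  haveI := hπ.1
  have hE : 0 ≤ Ent π μ := ent_nonneg π μ hac
  rw [JKOprox, KL, if_pos ⟨hac, hint⟩]
  have hKL : ((ENNReal.ofReal (∫ x, Real.log ((μ.rnDeriv π x).toReal) ∂μ) : ℝ≥0∞) : EReal)
      = ((Ent π μ : ℝ) : EReal) := by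
    rw [EReal.coe_ennreal_ofReal]
    congr 1
    exact max_eq_left hE
  rw [hKL, ← EReal.coe_mul, ← EReal.coe_add, ← EReal.coe_add]

lemma bridge_top {F : Measure (Ed d) → ℝ} {π μ0 : Measure (Ed d)} {σ τ : ℝ}
    (hσ : 0 < σ) {ν : Measure (Ed d)}
    (hν : ¬ Integrable (fun x => Real.log (rde π ν x)) ν) :
    JKOprox F π σ τ μ0 ν = ⊤ := by
  rw [JKOprox, KL, if_neg (fun h => hν h.2)]
  rw [EReal.coe_ennreal_top, EReal.coe_mul_top_of_pos hσ]
  rw [EReal.add_top_of_ne_bot (by simp), EReal.top_add_of_ne_bot (by simp)]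

end PP

/-- **Existence and uniqueness of the minimizer for the proximal point JKO step**
(Theorem 5.1). For `F` bounded below, flat-convex with Lipschitz/bounded flat derivative,
`σ, τ > 0`, a reference probability measure `π ∈ P₂(ℝ^d)` and `μ⁰ ∈ P₂(ℝ^d)` with
`μ⁰ ≪ π`, the functional `μ ↦ F(μ) + σ KL(μ|π) + W₂²(μ,μ⁰)/(2τ)` has a unique
minimizer over `{μ ∈ P₂(ℝ^d) : μ ≪ π}`. -/
theorem prox_point_step_exists_unique_minimizer {d : ℕ}
    (F : Measure (Ed d) → ℝ) (DF : Measure (Ed d) → Ed d → ℝ)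
    (π : Measure (Ed d)) (L_F C_F σ τ : ℝ)
    -- F is bounded below on P₂
    (hFbd : ∃ c : ℝ, ∀ μ : Measure (Ed d), P2 μ → c ≤ F μ)
    -- F ∈ C¹ with flat derivative DF, flat-convex
    (hflat : IsFlatDeriv F DF)
    (hconv : FlatConvex F DF)
    -- Lipschitzness and boundedness of the flat derivative
    (hlip : FlatLip DF L_F)
    (hbdd : FlatBdd DF C_F)
    (hσ : 0 < σ) (hτ : 0 < τ)
    -- π is a reference probability measure in P₂
    (hπ : P2 π)
    -- μ⁰ ∈ P₂ absolutely continuous w.r.t. π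
    (μ0 : Measure (Ed d)) (h0P2 : P2 μ0) (h0ac : μ0 ≪ π) :
    ∃! μ1 : Measure (Ed d), (P2 μ1 ∧ μ1 ≪ π) ∧
      ∀ ν : Measure (Ed d), P2 ν → ν ≪ π →
        JKOprox F π σ τ μ0 μ1 ≤ JKOprox F π σ τ μ0 ν := by
  classical
  haveI := hπ.1
  obtain ⟨μs, hμs, hmin⟩ := PP.exists_min F DF π L_F C_F σ τ hFbd hflat hconv hlip
    hbdd hσ hτ hπ μ0 h0P2 h0ac
  have hGdπ := PP.Gd_pi hπ
  refine ⟨μs, ⟨⟨hμs.1, hμs.2.1⟩, ?_⟩, ?_⟩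
  · intro ν hν hacν
    by_cases hi : Integrable (fun x => Real.log (PP.rde π ν x)) ν
    · have hGν : PP.Gd π ν := ⟨hν, hacν, hi⟩
      rw [PP.bridge hσ hπ hμs, PP.bridge hσ hπ hGν]
      exact_mod_cast hmin ν hGν
    · rw [PP.bridge_top hσ hi]
      exact le_top
  · rintro y ⟨⟨hyP2, hyac⟩, hy⟩
    have hGdy : PP.Gd π y := by
      refine ⟨hyP2, hyac, ?_⟩
      by_contra hi
      have h1 := hy π hπ Measure.AbsolutelyContinuous.rfl
      rw [PP.bridge_top (σ := σ) (τ := τ) (F := F) (μ0 := μ0) hσ hi,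
        PP.bridge hσ hπ hGdπ.1, top_le_iff] at h1
      exact (EReal.coe_ne_top _) h1
    have hymin : ∀ ν, PP.Gd π ν →
        F y + σ * PP.Ent π y + W2sq y μ0 / (2 * τ)
          ≤ F ν + σ * PP.Ent π ν + W2sq ν μ0 / (2 * τ) := by
      intro ν hGν
      have h2 := hy ν hGν.1 hGν.2.1
      rw [PP.bridge hσ hπ hGdy, PP.bridge hσ hπ hGν] at h2
      exact_mod_cast h2
    by_contra hne
    obtain ⟨hGm, hkey⟩ := PP.key_gap hσ hτ hπ h0P2 hflat hconv hlip hbdd hGdy hμs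
    have hH : 0 < PP.Hsq π y μs := by
      rcases lt_or_eq_of_le (PP.hsq_nonneg π y μs) with h | h
      · exact h
      · haveI := hyP2.1
        haveI := hμs.1.1
        exact absurd (PP.eq_of_hsq_zero hyac hμs.2.1 h.symm) hne
    have h1 := hymin _ hGm
    have h2 := hmin y hGdy
    have hσH : 0 < σ / 4 * PP.Hsq π y μs := by positivity
    linarith
end
end
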